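/- arXiv:2510.15450 — 9 statements merged into one kernel-verified Lean document; each statement's English description precedes it below -/
import Mathlib

section
/- Let α > 0, s > 0, let j be a real number with j ≥ 1, and let a < b be real numbers with b − a < α·j·s. Let k ≥ 1 be an integer and let 0 ≤ x₁ < x₂ < ⋯ < x_k < α·j be real numbers. For t ∈ ℝ define the set 𝔏_{s,t} = { s·x_i + t·j + α·j·n·s : n ∈ ℤ, 1 ≤ i ≤ k } ⊆ ℝ. Then ∫_{1−αs}^{1} #(𝔏_{s,t} ∩ (a,b]) dt = (k/j)·(b − a), where #(𝔏_{s,t} ∩ (a,b]) denotes the (finite) cardinality of 𝔏_{s,t} ∩ (a,b] and the integral is the Lebesgue integral in t over the interval [1 − αs, 1]. -/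
open MeasureTheory

lemma fract_periodic' : Function.Periodic (Int.fract : ℝ → ℝ) 1 :=
  fun x => Int.fract_add_one x

lemma integral_fract_unit' (w : ℝ) : ∫ t in w..(w+1), Int.fract t = 1/2 := by
  rw [fract_periodic'.intervalIntegral_add_eq w 0, zero_add]
  have h1 : ∀ᵐ t : ℝ, t ∈ Set.uIoc (0:ℝ) 1 → Int.fract t = t := by
    have hne : ∀ᵐ t : ℝ, t ≠ 1 := by
      rw [ae_iff]
      simpa [Set.setOf_eq_eq_singleton'] using Real.volume_singleton (a := (1:ℝ))
    filter_upwards [hne] with t ht hmem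
    rw [Set.uIoc_of_le zero_le_one] at hmem
    exact Int.fract_eq_self.2 ⟨hmem.1.le, lt_of_le_of_ne hmem.2 ht⟩
  rw [intervalIntegral.integral_congr_ae h1, integral_id]
  norm_num

lemma fract_affine_intervalIntegrable' (e c A B : ℝ) :
    IntervalIntegrable (fun t => Int.fract (e + c * t)) volume A B := by
  apply IntervalIntegrable.mono_fun' (g := fun _ => (1:ℝ)) intervalIntegrable_const
  · exact (((measurable_id.const_mul c).const_add e).fract).aestronglyMeasurable
  · filter_upwards with t
    rw [Real.norm_eq_abs, abs_of_nonneg (Int.fract_nonneg _)]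
    exact (Int.fract_lt_one _).le

/-- Average number of points of the "periodic" set
`𝔏_{s,t} = {s xᵢ + t j + α j n s : n ∈ ℤ, 1 ≤ i ≤ k}` in the interval `(a, b]`,
averaged over `t ∈ [1 - αs, 1]`, equals `(k/j)(b - a)`. -/
theorem average_points_periodic_sequence
    (α s j : ℝ) (hα : 0 < α) (hs : 0 < s) (hj : 1 ≤ j)
    (a b : ℝ) (hab : a < b) (hba : b - a < α * j * s)
    (k : ℕ) (hk : 1 ≤ k) (x : Fin k → ℝ)
    (hx0 : ∀ i, 0 ≤ x i) (hxmono : StrictMono x) (hxlt : ∀ i, x i < α * j) :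
    (∫ t in (1 - α * s)..1,
        (Nat.card {y : ℝ |
          (∃ (n : ℤ) (i : Fin k), y = s * x i + t * j + α * j * n * s) ∧
            y ∈ Set.Ioc a b} : ℝ)) = ((k : ℝ) / j) * (b - a) := by
  have hj0 : (0:ℝ) < j := lt_of_lt_of_le one_pos hj
  set P : ℝ := α * j * s with hP
  have hP0 : 0 < P := by positivity
  have hxP : ∀ i : Fin k, 0 ≤ s * x i ∧ s * x i < P := by
    intro i
    refine ⟨mul_nonneg hs.le (hx0 i), ?_⟩
    have := mul_lt_mul_of_pos_left (hxlt i) hs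
    nlinarith
  -- pointwise counting formula
  have key : ∀ t : ℝ,
      (Nat.card {y : ℝ |
          (∃ (n : ℤ) (i : Fin k), y = s * x i + t * j + α * j * n * s) ∧
            y ∈ Set.Ioc a b} : ℝ)
        = ∑ i : Fin k,
            ((⌊(b - s * x i - t * j) / P⌋ : ℝ) - (⌊(a - s * x i - t * j) / P⌋ : ℝ)) := by
    intro t
    set u : Fin k → ℝ := fun i => (a - s * x i - t * j) / P with hu
    set v : Fin k → ℝ := fun i => (b - s * x i - t * j) / P with hv
    have hbaP1 : (b - a) / P < 1 := (div_lt_one hP0).2 hba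
    have hbaP0 : 0 ≤ (b - a) / P := div_nonneg (by linarith) hP0.le
    have huv : ∀ i, v i = u i + (b - a) / P := by
      intro i; simp only [hu, hv]; field_simp; ring
    set yy : Fin k → ℝ := fun i => s * x i + t * j + P * ⌊v i⌋ with hyy
    set F : Finset (Fin k) := Finset.univ.filter (fun i => ⌊u i⌋ < ⌊v i⌋) with hF
    have hinj : Function.Injective yy := by
      intro i i' h
      simp only [hyy] at h
      have hm : ((⌊v i'⌋ - ⌊v i⌋ : ℤ) : ℝ) * P = s * x i - s * x i' := by
        push_cast; nlinarith [h]
      have h1 := (hxP i).1; have h2 := (hxP i).2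
      have h3 := (hxP i').1; have h4 := (hxP i').2
      have hlt : ((⌊v i'⌋ - ⌊v i⌋ : ℤ) : ℝ) < 1 := by nlinarith
      have hgt : (-1 : ℝ) < ((⌊v i'⌋ - ⌊v i⌋ : ℤ) : ℝ) := by nlinarith
      have hlt' : (⌊v i'⌋ - ⌊v i⌋ : ℤ) < 1 := by exact_mod_cast hlt
      have hgt' : (-1 : ℤ) < (⌊v i'⌋ - ⌊v i⌋ : ℤ) := by exact_mod_cast hgt
      have hm0 : (⌊v i'⌋ - ⌊v i⌋ : ℤ) = 0 := by omega
      have : s * x i = s * x i' := by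
        rw [hm0] at hm; push_cast at hm; linarith
      exact hxmono.injective (mul_left_cancel₀ hs.ne' this)
    have hset : {y : ℝ |
          (∃ (n : ℤ) (i : Fin k), y = s * x i + t * j + α * j * n * s) ∧
            y ∈ Set.Ioc a b} = ↑(F.image yy) := by
      ext y
      simp only [Set.mem_setOf_eq, Finset.coe_image, Set.mem_image, Finset.mem_coe, hF,
        Finset.mem_filter, Finset.mem_univ, true_and]
      constructor
      · rintro ⟨⟨n, i, rfl⟩, hy1, hy2⟩
        have hPn : α * j * (n : ℝ) * s = P * n := by rw [hP]; ring
        rw [hPn] at hy1 hy2 ⊢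
        have hun : u i < (n : ℝ) := by
          rw [hu]
          rw [div_lt_iff₀ hP0]
          nlinarith
        have hvn : (n : ℝ) ≤ v i := by
          rw [hv, le_div_iff₀ hP0]
          nlinarith
        have hn1 : n ≤ ⌊v i⌋ := Int.le_floor.2 hvn
        have hn2 : ⌊v i⌋ ≤ n := by
          rw [Int.floor_le_iff]
          rw [huv i]; push_cast
          linarith
        have hnv : n = ⌊v i⌋ := le_antisymm hn1 hn2
        refine ⟨i, ?_, ?_⟩
        · have : ⌊u i⌋ < n := Int.floor_lt.2 hun
          omega
        · rw [hyy, hnv]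
      · rintro ⟨i, hi, rfl⟩
        have hufl : u i < (⌊v i⌋ : ℝ) := Int.floor_lt.1 hi
        have hvfl : (⌊v i⌋ : ℝ) ≤ v i := Int.floor_le _
        have hua : u i * P = a - s * x i - t * j := by
          rw [hu]; field_simp
        have hvb : v i * P = b - s * x i - t * j := by
          rw [hv]; field_simp
        refine ⟨⟨⌊v i⌋, i, by rw [hyy, hP]; push_cast; ring⟩, ?_, ?_⟩
        · show a < s * x i + t * j + P * ↑⌊v i⌋
          nlinarith [mul_lt_mul_of_pos_right hufl hP0]
        · show s * x i + t * j + P * ↑⌊v i⌋ ≤ b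
          nlinarith [mul_le_mul_of_nonneg_right hvfl hP0.le]
    rw [hset, Nat.card_coe_set_eq, Set.ncard_coe_finset,
      Finset.card_image_of_injective F hinj, hF, Finset.card_filter]
    push_cast
    refine Finset.sum_congr rfl fun i _ => ?_
    have h1 : ⌊u i⌋ ≤ ⌊v i⌋ := Int.floor_le_floor (by rw [huv i]; linarith)
    have h2 : ⌊v i⌋ ≤ ⌊u i⌋ + 1 := by
      rw [Int.floor_le_iff]
      push_cast
      have := Int.lt_floor_add_one (u i)
      rw [huv i]; linarith
    rw [show ⌊(b - s * x i - t * j) / P⌋ = ⌊v i⌋ from rfl,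
      show ⌊(a - s * x i - t * j) / P⌋ = ⌊u i⌋ from rfl]
    by_cases h : ⌊u i⌋ < ⌊v i⌋
    · have hv1 : ⌊v i⌋ = ⌊u i⌋ + 1 := by omega
      rw [if_pos h, hv1]
      push_cast; ring
    · have hv1 : ⌊v i⌋ = ⌊u i⌋ := by omega
      rw [if_neg h, hv1]
      ring
  -- the integral of the fractional-part terms
  set c : ℝ := -(j / P) with hc
  have hcne : c ≠ 0 := by
    rw [hc]
    exact neg_ne_zero.2 (div_ne_zero hj0.ne' hP0.ne')
  have hIfract : ∀ e : ℝ,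
      ∫ t in (1 - α * s)..1, Int.fract ((e - t * j) / P) = α * s / 2 := by
    intro e
    have hrw : ∀ t : ℝ, (e - t * j) / P = e / P + c * t := by
      intro t; rw [hc]; ring
    simp only [hrw]
    rw [intervalIntegral.integral_comp_add_mul _ hcne (e / P)]
    have hshift : e / P + c * (1 - α * s) = (e / P + c * 1) + 1 := by
      rw [hc, hP]; field_simp; ring
    rw [hshift, intervalIntegral.integral_symm, integral_fract_unit', smul_eq_mul, hc, hP]
    field_simp
  have hint : ∀ e : ℝ, IntervalIntegrable (fun t => Int.fract ((e - t * j) / P))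
      volume (1 - α * s) 1 := by
    intro e
    have hrw : ∀ t : ℝ, (e - t * j) / P = e / P + c * t := by
      intro t; rw [hc]; ring
    simp only [hrw]
    exact fract_affine_intervalIntegrable' _ _ _ _
  -- per-index integral
  have hgi : ∀ i : Fin k,
      ∫ t in (1 - α * s)..1,
        ((⌊(b - s * x i - t * j) / P⌋ : ℝ) - (⌊(a - s * x i - t * j) / P⌋ : ℝ))
      = α * s * (b - a) / P := by
    intro i
    have hptw : ∀ t : ℝ,
        ((⌊(b - s * x i - t * j) / P⌋ : ℝ) - (⌊(a - s * x i - t * j) / P⌋ : ℝ))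
        = ((b - a) / P + Int.fract ((a - s * x i - t * j) / P))
            - Int.fract ((b - s * x i - t * j) / P) := by
      intro t
      rw [← Int.self_sub_fract, ← Int.self_sub_fract]
      ring
    simp only [hptw]
    rw [intervalIntegral.integral_sub (intervalIntegrable_const.add (hint (a - s * x i)))
        (hint (b - s * x i)),
      intervalIntegral.integral_add intervalIntegrable_const (hint (a - s * x i)),
      intervalIntegral.integral_const, hIfract, hIfract, smul_eq_mul]
    ring
  -- put everything together
  rw [intervalIntegral.integral_congr (g := fun t => ∑ i : Fin k,
      ((⌊(b - s * x i - t * j) / P⌋ : ℝ) - (⌊(a - s * x i - t * j) / P⌋ : ℝ)))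
      (fun t _ => key t)]
  rw [intervalIntegral.integral_finset_sum]
  · rw [Finset.sum_congr rfl (fun i _ => hgi i), Finset.sum_const, Finset.card_univ,
      Fintype.card_fin, nsmul_eq_mul, hP]
    field_simp
  · intro i _
    have hptw : ∀ t : ℝ,
        ((⌊(b - s * x i - t * j) / P⌋ : ℝ) - (⌊(a - s * x i - t * j) / P⌋ : ℝ))
        = ((b - a) / P + Int.fract ((a - s * x i - t * j) / P))
            - Int.fract ((b - s * x i - t * j) / P) := by
      intro t
      rw [← Int.self_sub_fract, ← Int.self_sub_fract]
      ring
    simp only [hptw]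
    exact (intervalIntegrable_const.add (hint (a - s * x i))).sub (hint (b - s * x i))
end

section
/- Let J ⊆ [1,∞) be a set of real numbers such that J ∩ [1,N) is finite for every real N, and let g : ℝ → ℝ satisfy g(j) ≥ 0 for every j ∈ J. For N > 0 write J_N = J ∩ [0,N). If there is c > 0 such that N^{−2} · Σ_{j ∈ J_N} g(j) → c as N → ∞ (limit along the reals, the sums being finite sums over the finite sets J_N), then N^{−1} · Σ_{j ∈ J_N} g(j)/j → 2c as N → ∞. -/
open Filter MeasureTheory Set intervalIntegral

lemma cesaro_integral (f : ℝ → ℝ) (hint : ∀ N : ℝ, IntervalIntegrable f volume 1 N)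
    (c : ℝ) (hf : Tendsto f atTop (nhds c)) :
    Tendsto (fun N : ℝ => (∫ t in (1:ℝ)..N, f t) / N) atTop (nhds c) := by
  rw [Metric.tendsto_atTop] at hf ⊢
  intro ε hε
  obtain ⟨M, hM⟩ := hf (ε / 2) (by positivity)
  set M' : ℝ := max M 1 with hM'def
  have hM'1 : (1:ℝ) ≤ M' := le_max_right _ _
  set A : ℝ := |∫ t in (1:ℝ)..M', f t| + |c| * M' with hAdef
  have hA0 : 0 ≤ A := by positivity
  refine ⟨max M' (2 * A / ε + M' + 1), fun N hN => ?_⟩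
  have hNM : M' ≤ N := le_trans (le_max_left _ _) hN
  have hN2 : 2 * A / ε + M' + 1 ≤ N := le_trans (le_max_right _ _) hN
  have hN1 : (1:ℝ) ≤ N := hM'1.trans hNM
  have hN0 : (0:ℝ) < N := by linarith
  have hint2 : IntervalIntegrable f volume M' N := (hint M').symm.trans (hint N)
  have hsplit : (∫ t in (1:ℝ)..N, f t) = (∫ t in (1:ℝ)..M', f t) + ∫ t in M'..N, f t :=
    (integral_add_adjacent_intervals (hint M') hint2).symm
  have key : (∫ t in (1:ℝ)..N, f t) / N - c
      = ((∫ t in (1:ℝ)..M', f t) - c * M') / N + (∫ t in M'..N, (f t - c)) / N := by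
    rw [hsplit, intervalIntegral.integral_sub hint2 (intervalIntegrable_const),
      intervalIntegral.integral_const]
    field_simp
    ring
  have hbound : ‖∫ t in M'..N, (f t - c)‖ ≤ (ε / 2) * |N - M'| := by
    apply intervalIntegral.norm_integral_le_of_norm_le_const
    intro x hx
    rw [Set.uIoc_of_le hNM] at hx
    have hxM : M ≤ x := le_trans (le_max_left _ _) hx.1.le
    have := hM x hxM
    rw [Real.dist_eq] at this
    exact this.le
  have h1 : |(∫ t in (1:ℝ)..M', f t) - c * M'| ≤ A := by
    calc |(∫ t in (1:ℝ)..M', f t) - c * M'|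
        ≤ |∫ t in (1:ℝ)..M', f t| + |c * M'| := abs_sub _ _
      _ = A := by rw [abs_mul, abs_of_nonneg (by linarith : (0:ℝ) ≤ M')]
  have hAN : A / N < ε / 2 := by
    have h2A : 2 * A / ε < N := by linarith
    rw [div_lt_iff₀ hε] at h2A
    rw [div_lt_iff₀ hN0]
    linarith
  rw [Real.dist_eq, key]
  calc |((∫ t in (1:ℝ)..M', f t) - c * M') / N + (∫ t in M'..N, (f t - c)) / N|
      ≤ |((∫ t in (1:ℝ)..M', f t) - c * M') / N| + |(∫ t in M'..N, (f t - c)) / N| :=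
        abs_add_le _ _
    _ = |(∫ t in (1:ℝ)..M', f t) - c * M'| / N + |∫ t in M'..N, (f t - c)| / N := by
        rw [abs_div, abs_div, abs_of_pos hN0]
    _ ≤ A / N + ((ε / 2) * |N - M'|) / N := by
        gcongr <;> first | exact h1 | exact hbound
    _ ≤ A / N + ((ε / 2) * N) / N := by
        gcongr
        rw [abs_of_nonneg (by linarith)]
        linarith
    _ = A / N + ε / 2 := by rw [mul_div_assoc, div_self hN0.ne', mul_one]
    _ < ε := by linarith

lemma abel_identity (J : Set ℝ) (hJ : J ⊆ Set.Ici 1)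
    (hfin : ∀ N : ℝ, (J ∩ Set.Ico 0 N).Finite)
    (g : ℝ → ℝ) (N : ℝ) (hN : 1 ≤ N) :
    (∑ j ∈ (hfin N).toFinset, g j / j)
      = (∑ j ∈ (hfin N).toFinset, g j) / N
        + ∫ t in (1:ℝ)..N, (∑ j ∈ (hfin t).toFinset, g j) / t ^ 2 := by
  have hmem : ∀ j ∈ (hfin N).toFinset, j ∈ J ∧ 1 ≤ j ∧ j < N := by
    intro j hj
    rw [Set.Finite.mem_toFinset] at hj
    exact ⟨hj.1, hJ hj.1, hj.2.2⟩
  -- rewrite the integrand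
  have hEq : ∀ t ∈ Set.uIcc (1:ℝ) N,
      (∑ j ∈ (hfin t).toFinset, g j) / t ^ 2
        = ∑ j ∈ (hfin N).toFinset, Set.indicator (Set.Ioi j) (fun s => g j / s ^ 2) t := by
    intro t ht
    rw [Set.uIcc_of_le hN] at ht
    have hfilter : (hfin t).toFinset = (hfin N).toFinset.filter (fun j => j < t) := by
      ext j
      simp only [Set.Finite.mem_toFinset, Finset.mem_filter, Set.mem_inter_iff, Set.mem_Ico]
      constructor
      · rintro ⟨h1, h2, h3⟩
        exact ⟨⟨h1, h2, lt_of_lt_of_le h3 ht.2⟩, h3⟩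
      · rintro ⟨⟨h1, h2, _⟩, h4⟩
        exact ⟨h1, h2, h4⟩
    rw [hfilter, Finset.sum_filter, Finset.sum_div]
    apply Finset.sum_congr rfl
    intro j hj
    rw [Set.indicator_apply]
    simp only [Set.mem_Ioi]
    split <;> simp
  have hind : ∀ j ∈ (hfin N).toFinset,
      IntervalIntegrable (Set.indicator (Set.Ioi j) (fun s => g j / s ^ 2)) volume 1 N := by
    intro j hj
    obtain ⟨_, hj1, hjN⟩ := hmem j hj
    rw [intervalIntegrable_iff_integrableOn_Ioc_of_le hN]
    apply MeasureTheory.IntegrableOn.indicator _ measurableSet_Ioi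
    have hcont : ContinuousOn (fun s : ℝ => g j / s ^ 2) (Set.Icc 1 N) := by
      apply ContinuousOn.div continuousOn_const (continuous_pow 2).continuousOn
      intro x hx
      exact pow_ne_zero 2 (by linarith [hx.1] : x ≠ 0)
    exact (hcont.integrableOn_Icc).mono_set Set.Ioc_subset_Icc_self
  rw [intervalIntegral.integral_congr hEq, intervalIntegral.integral_finset_sum hind]
  have hterm : ∀ j ∈ (hfin N).toFinset,
      (∫ t in (1:ℝ)..N, Set.indicator (Set.Ioi j) (fun s => g j / s ^ 2) t)
        = g j * (j⁻¹ - N⁻¹) := by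
    intro j hj
    obtain ⟨_, hj1, hjN⟩ := hmem j hj
    have hj0 : (0:ℝ) < j := by linarith
    rw [intervalIntegral.integral_of_le hN, MeasureTheory.setIntegral_indicator measurableSet_Ioi]
    have hset : Set.Ioc (1:ℝ) N ∩ Set.Ioi j = Set.Ioc j N := by
      ext x
      simp only [Set.mem_inter_iff, Set.mem_Ioc, Set.mem_Ioi]
      constructor
      · rintro ⟨⟨_, h2⟩, h3⟩; exact ⟨h3, h2⟩
      · rintro ⟨h1, h2⟩; exact ⟨⟨lt_of_le_of_lt hj1 h1, h2⟩, h1⟩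
    rw [hset, ← intervalIntegral.integral_of_le hjN.le]
    have : (∫ t in j..N, g j / t ^ 2) = g j * ∫ t in j..N, (t:ℝ) ^ (-2 : ℤ) := by
      rw [← intervalIntegral.integral_const_mul]
      apply intervalIntegral.integral_congr
      intro x hx
      rw [Set.uIcc_of_le hjN.le] at hx
      have hx0 : x ≠ 0 := by intro h; rw [h] at hx; linarith [hx.1]
      field_simp
    rw [this, integral_zpow]
    · norm_num
      exact Or.inl (by ring)
    · right
      constructor
      · decide
      · rw [Set.uIcc_of_le hjN.le]
        intro h
        linarith [h.1]
  rw [Finset.sum_congr rfl hterm]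
  rw [Finset.sum_div]
  rw [← Finset.sum_add_distrib]
  apply Finset.sum_congr rfl
  intro j hj
  rw [div_eq_mul_inv, div_eq_mul_inv]
  ring

/-- Abel summation asymptotics: if `N⁻² Σ_{j ∈ J ∩ [0,N)} g(j) → c > 0`,
then `N⁻¹ Σ_{j ∈ J ∩ [0,N)} g(j)/j → 2c`. -/
theorem abel_summation_asymptotics
    (J : Set ℝ) (hJ : J ⊆ Set.Ici 1)
    (hfin : ∀ N : ℝ, (J ∩ Set.Ico 0 N).Finite)
    (g : ℝ → ℝ) (hg : ∀ j ∈ J, 0 ≤ g j)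
    (c : ℝ) (hc : 0 < c)
    (hlim : Tendsto (fun N : ℝ => (∑ j ∈ (hfin N).toFinset, g j) / N ^ 2)
      atTop (nhds c)) :
    Tendsto (fun N : ℝ => (∑ j ∈ (hfin N).toFinset, g j / j) / N)
      atTop (nhds (2 * c)) := by
  set S : ℝ → ℝ := fun t => ∑ j ∈ (hfin t).toFinset, g j with hSdef
  have hSnn : ∀ t, 0 ≤ S t := by
    intro t
    apply Finset.sum_nonneg
    intro j hj
    rw [Set.Finite.mem_toFinset] at hj
    exact hg j hj.1
  have hSmono : Monotone S := by
    intro a b hab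
    apply Finset.sum_le_sum_of_subset_of_nonneg
    · intro x hx
      rw [Set.Finite.mem_toFinset] at *
      exact ⟨hx.1, hx.2.1, lt_of_lt_of_le hx.2.2 hab⟩
    · intro j hj _
      rw [Set.Finite.mem_toFinset] at hj
      exact hg j hj.1
  have hSzero : ∀ t ≤ 1, S t = 0 := by
    intro t ht
    apply Finset.sum_eq_zero
    intro j hj
    rw [Set.Finite.mem_toFinset] at hj
    have := hJ hj.1
    rw [Set.mem_Ici] at this
    linarith [hj.2.2]
  have hSmeas : Measurable S := hSmono.measurable
  set f : ℝ → ℝ := fun t => S t / t ^ 2 with hfdef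
  have hfmeas : Measurable f := hSmeas.div ((measurable_id.pow_const 2))
  have hint : ∀ N : ℝ, IntervalIntegrable f volume 1 N := by
    intro N
    rw [intervalIntegrable_iff]
    apply Measure.integrableOn_of_bounded (M := S (max 1 N)) measure_Ioc_lt_top.ne
      hfmeas.aestronglyMeasurable
    apply MeasureTheory.ae_restrict_of_forall_mem measurableSet_uIoc
    intro x hx
    rcases le_or_gt x 1 with hx1 | hx1
    · simp only [hfdef, hSzero x hx1, zero_div, norm_zero]
      exact hSnn _
    · have hxle : x ≤ max 1 N := by
        rcases Set.mem_uIoc.mp hx with h | h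
        · exact h.2.trans (le_max_right _ _)
        · linarith [h.2, hx1]
      have hx2 : (1:ℝ) ≤ x ^ 2 := by nlinarith
      have hfx : 0 ≤ f x := div_nonneg (hSnn x) (by positivity)
      rw [Real.norm_eq_abs, abs_of_nonneg hfx]
      have h3 : S x ≤ S (max 1 N) := hSmono hxle
      show S x / x ^ 2 ≤ S (max 1 N)
      rw [div_le_iff₀ (by positivity)]
      nlinarith [hSnn x, hSnn (max 1 N)]
  have hces : Tendsto (fun N : ℝ => (∫ t in (1:ℝ)..N, f t) / N) atTop (nhds c) :=
    cesaro_integral f hint c hlim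
  have hcomb := (hlim.add hces)
  rw [show c + c = 2 * c by ring] at hcomb
  apply hcomb.congr'
  filter_upwards [eventually_ge_atTop (1:ℝ)] with N hN
  have hN0 : (0:ℝ) < N := by linarith
  rw [abel_identity J hJ hfin g N hN]
  rw [add_div]
  congr 1
  show S N / N ^ 2 = S N / N / N
  rw [div_div, sq]
end

section
/- Fix α > 0 and let Λ ⊆ ℝ² be α-shear-invariant and locally finite. Then for every R > 0 the set J_R = {y ∈ (0,R) : (x,y) ∈ Λ for some x ∈ ℝ} is finite; in particular the height set J of Λ is a discrete subset of the positive reals. -/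
/-- The shear map `h_α(x,y) = (x + αy, y)` on `ℝ²`. -/
def shear (α : ℝ) : ℝ × ℝ → ℝ × ℝ := fun p => (p.1 + α * p.2, p.2)

/-- The height set of `Λ ⊆ ℝ²`: the positive heights of points of `Λ`. -/
def heightSet (Λ : Set (ℝ × ℝ)) : Set ℝ := {y : ℝ | 0 < y ∧ ∃ x : ℝ, (x, y) ∈ Λ}

lemma shear_iter_mem (α : ℝ) (Λ : Set (ℝ × ℝ)) (hshear : shear α '' Λ = Λ) :
    ∀ (n : ℤ) (x y : ℝ), (x, y) ∈ Λ → (x + n * (α * y), y) ∈ Λ := by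
  have fwd : ∀ x y : ℝ, (x, y) ∈ Λ → (x + α * y, y) ∈ Λ := by
    intro x y h
    have : shear α (x, y) ∈ shear α '' Λ := Set.mem_image_of_mem _ h
    rwa [hshear] at this
  have bwd : ∀ x y : ℝ, (x, y) ∈ Λ → (x - α * y, y) ∈ Λ := by
    intro x y h
    rw [← hshear] at h
    obtain ⟨⟨a, b⟩, hab, heq⟩ := h
    simp only [shear, Prod.mk.injEq] at heq
    obtain ⟨h1, h2⟩ := heq
    subst h2
    have : a = x - α * b := by linarith
    subst this
    exact hab
  intro n
  induction n using Int.induction_on with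
  | zero => intro x y h; simpa using h
  | succ k ih =>
    intro x y h
    have := fwd _ _ (ih x y h)
    convert this using 2
    push_cast
    ring
  | pred k ih =>
    intro x y h
    have := bwd _ _ (ih x y h)
    convert this using 2
    push_cast
    ring

lemma heights_finite (α : ℝ) (hα : 0 < α) (Λ : Set (ℝ × ℝ))
    (hshear : shear α '' Λ = Λ)
    (hloc : ∀ K : Set (ℝ × ℝ), IsCompact K → (Λ ∩ K).Finite) :
    ∀ R : ℝ, 0 < R → (heightSet Λ ∩ Set.Ioo 0 R).Finite := by
  intro R hR
  set K : Set (ℝ × ℝ) := Set.Icc 0 (α * R) ×ˢ Set.Icc 0 R with hK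
  have hKc : IsCompact K := (isCompact_Icc).prod isCompact_Icc
  have hfin := hloc K hKc
  apply Set.Finite.subset (hfin.image Prod.snd)
  rintro y ⟨⟨hy0, x, hx⟩, hy0', hyR⟩
  set t : ℝ := α * y with ht
  have ht0 : 0 < t := mul_pos hα hy0
  set n : ℤ := -⌊x / t⌋ with hn
  have hmem : (x + n * t, y) ∈ Λ := shear_iter_mem α Λ hshear n x y hx
  have hx' : x + n * t = t * Int.fract (x / t) := by
    rw [Int.fract, hn]
    push_cast
    field_simp
    ring
  refine ⟨(x + n * t, y), ⟨hmem, ?_, ?_⟩, rfl⟩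
  · constructor
    · rw [hx']
      exact mul_nonneg ht0.le (Int.fract_nonneg _)
    · rw [hx']
      have h1 : t * Int.fract (x / t) < t := by
        nlinarith [Int.fract_lt_one (x / t), Int.fract_nonneg (x / t)]
      have h2 : t ≤ α * R := by
        rw [ht]; nlinarith
      linarith
  · exact ⟨hy0.le, hyR.le⟩

/-- If `Λ ⊆ ℝ²` is `α`-shear-invariant and locally finite, then for every
`R > 0` the set `J_R` of heights of `Λ` in `(0, R)` is finite; in particular
the height set `J` is a discrete subset of the positive reals. -/
theorem heights_discrete
    (α : ℝ) (hα : 0 < α) (Λ : Set (ℝ × ℝ))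
    (hshear : shear α '' Λ = Λ)
    (hloc : ∀ K : Set (ℝ × ℝ), IsCompact K → (Λ ∩ K).Finite) :
    (∀ R : ℝ, 0 < R → (heightSet Λ ∩ Set.Ioo 0 R).Finite) ∧
      (∀ j ∈ heightSet Λ, ∃ ε > 0,
        ∀ j' ∈ heightSet Λ, |j' - j| < ε → j' = j) := by
  have hfin := heights_finite α hα Λ hshear hloc
  refine ⟨hfin, ?_⟩
  intro j hj
  have hj0 : 0 < j := hj.1
  have hF : (heightSet Λ ∩ Set.Ioo 0 (j + 1)).Finite := hfin (j + 1) (by linarith)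
  set T : Finset ℝ := hF.toFinset.erase j with hT
  have key : ∀ j' ∈ heightSet Λ, |j' - j| < 1 → j' ≠ j → j' ∈ T := by
    intro j' hj' habs hne
    rw [hT, Finset.mem_erase]
    refine ⟨hne, ?_⟩
    rw [Set.Finite.mem_toFinset]
    refine ⟨hj', hj'.1, ?_⟩
    have := abs_lt.mp habs
    linarith [this.2]
  by_cases hTne : T.Nonempty
  · refine ⟨min 1 (T.inf' hTne fun s => |s - j|), ?_, ?_⟩
    · apply lt_min one_pos
      rw [Finset.lt_inf'_iff]
      intro s hs
      have hsne : s ≠ j := (Finset.mem_erase.mp hs).1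
      exact abs_pos.mpr (sub_ne_zero.mpr hsne)
    · intro j' hj' hlt
      by_contra hne
      have h1 : |j' - j| < 1 := lt_of_lt_of_le hlt (min_le_left _ _)
      have hmem := key j' hj' h1 hne
      have h2 : T.inf' hTne (fun s => |s - j|) ≤ |j' - j| :=
        Finset.inf'_le _ hmem
      have h3 : |j' - j| < T.inf' hTne fun s => |s - j| :=
        lt_of_lt_of_le hlt (min_le_right _ _)
      linarith
  · refine ⟨1, one_pos, ?_⟩
    intro j' hj' hlt
    by_contra hne
    exact hTne ⟨j', key j' hj' hlt hne⟩
end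

section
/- Let Γ be a subgroup of SL(2,ℝ) and α > 0 with the matrix [[1, α],[0, 1]] ∈ Γ, and suppose there exists a matrix A = [[a, b],[c, d]] ∈ Γ with lower-left entry c ≠ 0. Let x > 0 and let Λ ⊆ ℝ² be invariant under the action of Γ by matrix–vector multiplication, with (x,0) ∈ Λ. Then: (i) for every positive integer n there exists u ∈ ℝ with (u, n·α·c²·x) ∈ Λ; and consequently (ii) for every t ≥ 0 there exists y with t < y ≤ t + α·c²·x such that (x', y) ∈ Λ for some x' ∈ ℝ. In particular the gaps between consecutive elements of the height set J = {y > 0 : (x',y) ∈ Λ for some x'} are bounded above by α·c²·x. -/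
open Matrix

/-- If `Γ ≤ SL(2,ℝ)` contains the shear `[[1,α],[0,1]]` and some matrix `A`
with lower-left entry `c ≠ 0`, and `Λ ⊆ ℝ²` is `Γ`-invariant with `(x,0) ∈ Λ`
for some `x > 0`, then (i) for every positive integer `n` the set `Λ` contains
a point of height `n α c² x`, and (ii) every interval `(t, t + α c² x]` with
`t ≥ 0` contains a height of `Λ`; in particular the gaps between consecutive
heights of `Λ` are bounded above by `α c² x`. -/
theorem height_gaps_bounded
    (α : ℝ) (hα : 0 < α)
    (Γ : Subgroup (Matrix.SpecialLinearGroup (Fin 2) ℝ))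
    (hshearΓ : ∃ γ ∈ Γ, (γ : Matrix (Fin 2) (Fin 2) ℝ) = !![1, α; 0, 1])
    (A : Matrix.SpecialLinearGroup (Fin 2) ℝ) (hA : A ∈ Γ)
    (c : ℝ) (hcdef : c = (A : Matrix (Fin 2) (Fin 2) ℝ) 1 0) (hc : c ≠ 0)
    (x : ℝ) (hx : 0 < x)
    (Λ : Set (Fin 2 → ℝ))
    (hΛinv : ∀ γ ∈ Γ, ∀ v ∈ Λ, (γ : Matrix (Fin 2) (Fin 2) ℝ).mulVec v ∈ Λ)
    (hxΛ : ![x, 0] ∈ Λ) :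
    (∀ n : ℕ, 0 < n → ∃ u : ℝ, ![u, (n : ℝ) * α * c ^ 2 * x] ∈ Λ) ∧
      (∀ t : ℝ, 0 ≤ t → ∃ y : ℝ, t < y ∧ y ≤ t + α * c ^ 2 * x ∧
        ∃ x' : ℝ, ![x', y] ∈ Λ) := by
  obtain ⟨γ, hγΓ, hγ⟩ := hshearΓ
  have hγinv : ((γ⁻¹ : Matrix.SpecialLinearGroup (Fin 2) ℝ) : Matrix (Fin 2) (Fin 2) ℝ)
      = !![1, -α; 0, 1] := by
    rw [Matrix.SpecialLinearGroup.coe_inv, hγ, Matrix.adjugate_fin_two]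
    norm_num
  have hpow : ∀ n : ℕ, ((γ⁻¹ ^ n : Matrix.SpecialLinearGroup (Fin 2) ℝ)
      : Matrix (Fin 2) (Fin 2) ℝ) = !![1, -(n : ℝ) * α; 0, 1] := by
    intro n
    induction n with
    | zero => simp [Matrix.one_fin_two]
    | succ k ih =>
      rw [pow_succ, Matrix.SpecialLinearGroup.coe_mul, ih, hγinv, Matrix.mul_fin_two]
      push_cast
      congr 1 <;> ring
  set a : ℝ := (A : Matrix (Fin 2) (Fin 2) ℝ) 0 0 with ha
  set b : ℝ := (A : Matrix (Fin 2) (Fin 2) ℝ) 0 1 with hb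
  set d : ℝ := (A : Matrix (Fin 2) (Fin 2) ℝ) 1 1 with hd
  have hAeta : (A : Matrix (Fin 2) (Fin 2) ℝ) = !![a, b; c, d] := by
    rw [ha, hb, hcdef, hd]
    exact Matrix.etaExpand_eq (A : Matrix (Fin 2) (Fin 2) ℝ) ▸ rfl
  have key : ∀ n : ℕ, 0 < n → ∃ u : ℝ, ![u, (n : ℝ) * α * c ^ 2 * x] ∈ Λ := by
    intro n hn
    set g := A⁻¹ * γ⁻¹ ^ n * A with hg
    have hgΓ : g ∈ Γ := mul_mem (mul_mem (inv_mem hA) (pow_mem (inv_mem hγΓ) n)) hA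
    have hmem := hΛinv g hgΓ ![x, 0] hxΛ
    refine ⟨d * (a * x - (n : ℝ) * α * c * x) - b * (c * x), ?_⟩
    have hcoe : (g : Matrix (Fin 2) (Fin 2) ℝ)
        = (Matrix.adjugate (A : Matrix (Fin 2) (Fin 2) ℝ)) * !![1, -(n : ℝ) * α; 0, 1]
          * (A : Matrix (Fin 2) (Fin 2) ℝ) := by
      rw [hg, Matrix.SpecialLinearGroup.coe_mul, Matrix.SpecialLinearGroup.coe_mul,
        Matrix.SpecialLinearGroup.coe_inv, hpow]
    have : (g : Matrix (Fin 2) (Fin 2) ℝ).mulVec ![x, 0]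
        = ![d * (a * x - (n : ℝ) * α * c * x) - b * (c * x), (n : ℝ) * α * c ^ 2 * x] := by
      rw [hcoe, hAeta, Matrix.adjugate_fin_two, Matrix.mul_fin_two, Matrix.mul_fin_two]
      funext i
      fin_cases i <;>
        · simp [Matrix.mulVec, dotProduct, Fin.sum_univ_two,
            -mul_eq_mul_right_iff, -mul_eq_mul_left_iff]
          ring
    rwa [this] at hmem
  refine ⟨key, ?_⟩
  intro t ht
  set C : ℝ := α * c ^ 2 * x with hC
  have hCpos : 0 < C := by
    have : 0 < c ^ 2 := by positivity
    positivity
  set n : ℕ := ⌊t / C⌋₊ + 1 with hn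
  obtain ⟨u, hu⟩ := key n (Nat.succ_pos _)
  refine ⟨(n : ℝ) * C, ?_, ?_, u, ?_⟩
  · have h1 : t / C < (n : ℝ) := by
      rw [hn]; push_cast; exact Nat.lt_floor_add_one _
    calc t = t / C * C := by field_simp
      _ < (n : ℝ) * C := by
          exact mul_lt_mul_of_pos_right h1 hCpos
  · have h2 : (⌊t / C⌋₊ : ℝ) ≤ t / C := Nat.floor_le (by positivity)
    have : (n : ℝ) * C ≤ (t / C + 1) * C := by
      apply mul_le_mul_of_nonneg_right _ hCpos.le
      rw [hn]; push_cast; linarith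
    calc (n : ℝ) * C ≤ (t / C + 1) * C := this
      _ = t + C := by field_simp
  · have : (n : ℝ) * C = (n : ℝ) * α * c ^ 2 * x := by rw [hC]; ring
    rwa [this]
end

section
/- Fix α > 0 and let Λ ⊆ ℝ² be α-shear-invariant and locally finite. For R > 0 let T_R = {(x,y) ∈ ℝ² : 0 < y < R, 0 ≤ x < αy}, and suppose there is c > 0 such that R^{−2} · #(Λ ∩ T_R) → c as R → ∞. Then: (1) R^{−2} · Σ_{j ∈ J_R} φ(j) → c as R → ∞; and (2) R^{−1} · Σ_{j ∈ J_R} φ(j)/j → 2c as R → ∞, where the sums are finite sums over the finite sets J_R. -/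
open Filter MeasureTheory

/-- `φ(j)`: the number of `x ∈ [0, αj)` with `(x, j) ∈ Λ`. -/
noncomputable def phiCount (α : ℝ) (Λ : Set (ℝ × ℝ)) (j : ℝ) : ℕ :=
  Nat.card {x : ℝ | (x, j) ∈ Λ ∧ 0 ≤ x ∧ x < α * j}

def Pset (α : ℝ) (Λ : Set (ℝ × ℝ)) (R : ℝ) : Set (ℝ × ℝ) :=
  {p : ℝ × ℝ | p ∈ Λ ∧ 0 < p.2 ∧ p.2 < R ∧ 0 ≤ p.1 ∧ p.1 < α * p.2}

lemma Pset_finite {α : ℝ} (hα : 0 < α) {Λ : Set (ℝ × ℝ)}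
    (hloc : ∀ K : Set (ℝ × ℝ), IsCompact K → (Λ ∩ K).Finite) (R : ℝ) :
    (Pset α Λ R).Finite := by
  have hK : IsCompact ((Set.Icc (0:ℝ) (α * |R|)) ×ˢ (Set.Icc (0:ℝ) |R|)) :=
    isCompact_Icc.prod isCompact_Icc
  refine (hloc _ hK).subset ?_
  rintro ⟨x, y⟩ ⟨hΛ, hy0, hyR, hx0, hxy⟩
  have hyR' : y ≤ |R| := le_trans hyR.le (le_abs_self R)
  exact ⟨hΛ, ⟨hx0, le_trans hxy.le (by nlinarith)⟩, ⟨hy0.le, hyR'⟩⟩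

lemma shear_mem_iff {α : ℝ} {Λ : Set (ℝ × ℝ)} (hshear : shear α '' Λ = Λ)
    (x y : ℝ) : (x + α * y, y) ∈ Λ ↔ (x, y) ∈ Λ := by
  constructor
  · intro h
    rw [← hshear] at h
    obtain ⟨⟨u, v⟩, huv, heq⟩ := h
    simp only [shear, Prod.mk.injEq] at heq
    obtain ⟨h1, h2⟩ := heq
    subst h2
    have : u = x := by linarith
    subst this; exact huv
  · intro h
    rw [← hshear]
    exact ⟨(x, y), h, rfl⟩

lemma shear_zsmul {α : ℝ} {Λ : Set (ℝ × ℝ)} (hshear : shear α '' Λ = Λ)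
    (n : ℤ) (x y : ℝ) (h : (x, y) ∈ Λ) : (x + n * (α * y), y) ∈ Λ := by
  induction n using Int.induction_on with
  | zero => simpa using h
  | succ k ih =>
      have := (shear_mem_iff hshear (x + k * (α * y)) y).mpr ih
      convert this using 2
      push_cast; ring
  | pred k ih =>
      have h2 : ((x + (-(k:ℝ) - 1) * (α * y)) + α * y, y) ∈ Λ := by
        convert ih using 2; push_cast; ring
      have := (shear_mem_iff hshear (x + (-(k:ℝ) - 1) * (α * y)) y).mp h2
      convert this using 2; push_cast; ring

lemma exists_rep {α : ℝ} (hα : 0 < α) {Λ : Set (ℝ × ℝ)} (hshear : shear α '' Λ = Λ)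
    {j : ℝ} (hj : j ∈ heightSet Λ) :
    ∃ x : ℝ, (x, j) ∈ Λ ∧ 0 ≤ x ∧ x < α * j := by
  obtain ⟨hj0, x, hx⟩ := hj
  have hαj : 0 < α * j := mul_pos hα hj0
  have key := shear_zsmul hshear (-⌊x / (α * j)⌋) x j hx
  have heq : x + ((-⌊x / (α * j)⌋ : ℤ) : ℝ) * (α * j)
      = Int.fract (x / (α * j)) * (α * j) := by
    rw [Int.fract]
    push_cast
    field_simp
    ring
  rw [heq] at key
  refine ⟨_, key, mul_nonneg (Int.fract_nonneg _) hαj.le, ?_⟩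
  calc Int.fract (x / (α * j)) * (α * j) < 1 * (α * j) :=
        mul_lt_mul_of_pos_right (Int.fract_lt_one _) hαj
    _ = α * j := one_mul _

lemma fiber_finite {α : ℝ} (hα : 0 < α) {Λ : Set (ℝ × ℝ)}
    (hloc : ∀ K : Set (ℝ × ℝ), IsCompact K → (Λ ∩ K).Finite) {j : ℝ} (hj : 0 < j) :
    {x : ℝ | (x, j) ∈ Λ ∧ 0 ≤ x ∧ x < α * j}.Finite := by
  have himg : (fun x : ℝ => ((x, j) : ℝ × ℝ)) '' {x : ℝ | (x, j) ∈ Λ ∧ 0 ≤ x ∧ x < α * j}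
      ⊆ Pset α Λ (j + 1) := by
    rintro ⟨a, b⟩ ⟨x, ⟨hxΛ, hx0, hxj⟩, heq⟩
    obtain ⟨rfl, rfl⟩ := Prod.mk.injEq .. ▸ heq
    exact ⟨hxΛ, hj, by linarith, hx0, hxj⟩
  exact Set.Finite.of_finite_image ((Pset_finite hα hloc (j + 1)).subset himg)
    (fun a _ b _ h => by simpa using (Prod.mk.injEq .. ▸ h).1)

lemma height_eq {α : ℝ} (hα : 0 < α) {Λ : Set (ℝ × ℝ)} (hshear : shear α '' Λ = Λ)
    (R : ℝ) : heightSet Λ ∩ Set.Ioo 0 R = Prod.snd '' (Pset α Λ R) := by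
  ext j
  constructor
  · rintro ⟨hjH, hj0, hjR⟩
    obtain ⟨x, hx, hx0, hxα⟩ := exists_rep hα hshear hjH
    exact ⟨(x, j), ⟨hx, hj0, hjR, hx0, hxα⟩, rfl⟩
  · rintro ⟨⟨x, y⟩, ⟨hΛ, hy0, hyR, hx0, hxα⟩, rfl⟩
    exact ⟨⟨hy0, x, hΛ⟩, hy0, hyR⟩

lemma Jfin_finite {α : ℝ} (hα : 0 < α) {Λ : Set (ℝ × ℝ)} (hshear : shear α '' Λ = Λ)
    (hloc : ∀ K : Set (ℝ × ℝ), IsCompact K → (Λ ∩ K).Finite) (R : ℝ) :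
    (heightSet Λ ∩ Set.Ioo 0 R).Finite := by
  rw [height_eq hα hshear]
  exact (Pset_finite hα hloc R).image _

lemma sum_phi_eq {α : ℝ} (hα : 0 < α) {Λ : Set (ℝ × ℝ)} (hshear : shear α '' Λ = Λ)
    (hloc : ∀ K : Set (ℝ × ℝ), IsCompact K → (Λ ∩ K).Finite) (R : ℝ) :
    ∑ j ∈ (Jfin_finite hα hshear hloc R).toFinset, phiCount α Λ j
      = Nat.card (Pset α Λ R) := by
  classical
  set P := (Pset_finite hα hloc R).toFinset with hP
  set J := (Jfin_finite hα hshear hloc R).toFinset with hJdef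
  have hNc : Nat.card (Pset α Λ R) = P.card := by
    rw [Nat.card_coe_set_eq, Set.ncard_eq_toFinset_card _ (Pset_finite hα hloc R)]
  rw [hNc]
  rw [Finset.card_eq_sum_card_fiberwise (f := Prod.snd) (t := J) ?_]
  · refine Finset.sum_congr rfl fun j hj => ?_
    have hjmem : j ∈ heightSet Λ ∩ Set.Ioo 0 R := by
      simpa [hJdef] using hj
    have hj0 : 0 < j := hjmem.2.1
    have hjR : j < R := hjmem.2.2
    have hfib := fiber_finite hα hloc (Λ := Λ) hj0
    have hphi : phiCount α Λ j = hfib.toFinset.card := by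
      rw [phiCount, Nat.card_coe_set_eq, Set.ncard_eq_toFinset_card _ hfib]
    rw [hphi]
    refine (Finset.card_bij (fun p _ => p.1) ?_ ?_ ?_).symm
    · rintro ⟨a, b⟩ hp
      simp only [Finset.mem_filter, hP, Set.Finite.mem_toFinset] at hp ⊢
      obtain ⟨⟨hΛ, h0, hR, hx0, hxα⟩, rfl⟩ := hp
      exact ⟨hΛ, hx0, hxα⟩
    · rintro ⟨a, b⟩ ha ⟨a', b'⟩ hb h
      simp only [Finset.mem_filter, hP, Set.Finite.mem_toFinset] at ha hb
      simp only at h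
      exact Prod.ext h (ha.2.trans hb.2.symm)
    · intro x hx
      simp only [Set.Finite.mem_toFinset] at hx
      obtain ⟨hΛ, hx0, hxα⟩ := hx
      refine ⟨(x, j), ?_, rfl⟩
      simp only [Finset.mem_filter, Set.Finite.mem_toFinset, hP]
      exact ⟨⟨hΛ, hj0, hjR, hx0, hxα⟩, trivial⟩
  · intro p hp
    simp only [hP, Finset.mem_coe, Set.Finite.mem_toFinset] at hp
    simp only [hJdef, Finset.mem_coe, Set.Finite.mem_toFinset]
    exact ⟨⟨hp.2.1, p.1, by simpa using hp.1⟩, hp.2.1, hp.2.2.1⟩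

lemma finsum_mem_of_finite {s : Set ℝ} (hs : s.Finite) (f : ℝ → ℝ) :
    ∑ᶠ j ∈ s, f j = ∑ j ∈ hs.toFinset, f j := by
  rw [← finsum_mem_coe_finset, Set.Finite.coe_toFinset]

lemma finsum_phi {α : ℝ} (hα : 0 < α) {Λ : Set (ℝ × ℝ)} (hshear : shear α '' Λ = Λ)
    (hloc : ∀ K : Set (ℝ × ℝ), IsCompact K → (Λ ∩ K).Finite) (R : ℝ) :
    ∑ᶠ j ∈ heightSet Λ ∩ Set.Ioo 0 R, (phiCount α Λ j : ℝ)
      = (Nat.card (Pset α Λ R) : ℝ) := by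
  rw [finsum_mem_of_finite (Jfin_finite hα hshear hloc R)]
  rw [← Nat.cast_sum, sum_phi_eq hα hshear hloc R]

lemma cesaro_integral_s7 {g : ℝ → ℝ} {c : ℝ}
    (hint : ∀ M : ℝ, 0 < M → IntegrableOn g (Set.Ioc 0 M))
    (hg : Tendsto g atTop (nhds c)) :
    Tendsto (fun R : ℝ => (∫ t in Set.Ioc 0 R, g t) / R) atTop (nhds c) := by
  rw [Metric.tendsto_nhds]
  intro ε hε
  have h3 : 0 < ε / 3 := by linarith
  obtain ⟨M₀, hM₀⟩ := (Metric.tendsto_nhds.mp hg (ε / 3) h3).exists_forall_of_atTop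
  set M : ℝ := max M₀ 1 with hMdef
  have hM1 : (0:ℝ) < M := lt_of_lt_of_le one_pos (le_max_right _ _)
  set A : ℝ := ∫ t in Set.Ioc 0 M, g t with hA
  filter_upwards [eventually_ge_atTop (max M (3 * (|A| + |c| * M + 1) / ε))] with R hR
  have hRM : M ≤ R := le_trans (le_max_left _ _) hR
  have hR0 : 0 < R := lt_of_lt_of_le hM1 hRM
  have hεR : 3 * (|A| + |c| * M + 1) ≤ ε * R := by
    have := le_trans (le_max_right M _) hR
    rw [div_le_iff₀ hε] at this
    linarith
  -- split the integral
  have hsplit : ∫ t in Set.Ioc 0 R, g t = A + ∫ t in Set.Ioc M R, g t := by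
    rw [hA, ← MeasureTheory.setIntegral_union (Set.Ioc_disjoint_Ioc_of_le le_rfl) measurableSet_Ioc
      (hint M hM1) (((hint R hR0)).mono_set (Set.Ioc_subset_Ioc_left hM1.le)),
      Set.Ioc_union_Ioc_eq_Ioc hM1.le hRM]
  set B : ℝ := ∫ t in Set.Ioc M R, g t with hB
  have hBc : |B - c * (R - M)| ≤ ε / 3 * (R - M) := by
    have hconst : ∫ _t in Set.Ioc M R, c = (R - M) * c := by
      rw [MeasureTheory.setIntegral_const, Real.volume_real_Ioc_of_le hRM, smul_eq_mul]
    have hIB : IntegrableOn g (Set.Ioc M R) :=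
      (hint R hR0).mono_set (Set.Ioc_subset_Ioc_left hM1.le)
    have hsub : B - c * (R - M) = ∫ t in Set.Ioc M R, (g t - c) := by
      rw [MeasureTheory.integral_sub hIB (integrableOn_const
        (by rw [Real.volume_Ioc]; exact ENNReal.ofReal_ne_top))]
      rw [hconst, hB]; ring
    rw [hsub]
    have := MeasureTheory.norm_setIntegral_le_of_norm_le_const (μ := MeasureTheory.volume)
      (s := Set.Ioc M R) (f := fun t => g t - c) (C := ε / 3)
      (by rw [Real.volume_Ioc]; exact ENNReal.ofReal_lt_top)
      (fun x hx => by
        have hxM : M₀ ≤ x := le_trans (le_trans (le_max_left _ _) hx.1.le) le_rfl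
        have := hM₀ x hxM
        rw [Real.dist_eq] at this
        simpa [Real.norm_eq_abs] using this.le)
    rw [Real.norm_eq_abs] at this
    calc |∫ t in Set.Ioc M R, (g t - c)| ≤ ε / 3 * (MeasureTheory.volume (Set.Ioc M R)).toReal :=
          this
      _ = ε / 3 * (R - M) := by
          rw [Real.volume_Ioc, ENNReal.toReal_ofReal (by linarith)]
  -- conclude
  rw [Real.dist_eq, hsplit]
  have hrw : (A + B) / R - c = (A + B - c * R) / R := by field_simp
  rw [hrw, abs_lt]
  have hM0' : 0 ≤ M := hM1.le
  have habs1 : -|A| ≤ A ∧ A ≤ |A| := ⟨neg_abs_le A, le_abs_self A⟩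
  have habs2 : -(|c| * M) ≤ c * M ∧ c * M ≤ |c| * M := by
    constructor
    · nlinarith [neg_abs_le c, abs_nonneg c]
    · nlinarith [le_abs_self c, abs_nonneg c]
  have hBc' : -(ε / 3 * (R - M)) ≤ B - c * (R - M) ∧ B - c * (R - M) ≤ ε / 3 * (R - M) :=
    abs_le.mp hBc
  constructor
  · rw [lt_div_iff₀ hR0]
    nlinarith [habs1.1, habs2.2, hBc'.1, abs_nonneg A, abs_nonneg c]
  · rw [div_lt_iff₀ hR0]
    nlinarith [habs1.2, habs2.1, hBc'.2, abs_nonneg A, abs_nonneg c]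

noncomputable def Nr (α : ℝ) (Λ : Set (ℝ × ℝ)) (R : ℝ) : ℝ := (Nat.card (Pset α Λ R) : ℝ)

lemma Pset_mono (α : ℝ) (Λ : Set (ℝ × ℝ)) {a b : ℝ} (hab : a ≤ b) :
    Pset α Λ a ⊆ Pset α Λ b := by
  rintro ⟨x, y⟩ ⟨hΛ, h0, ha, hx0, hxα⟩
  exact ⟨hΛ, h0, lt_of_lt_of_le ha hab, hx0, hxα⟩

lemma Nr_mono {α : ℝ} (hα : 0 < α) {Λ : Set (ℝ × ℝ)}
    (hloc : ∀ K : Set (ℝ × ℝ), IsCompact K → (Λ ∩ K).Finite) :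
    Monotone (Nr α Λ) := fun a b hab =>
  Nat.cast_le.mpr (Nat.card_mono (Pset_finite hα hloc b) (Pset_mono α Λ hab))

lemma Nr_nonneg (α : ℝ) (Λ : Set (ℝ × ℝ)) (R : ℝ) : 0 ≤ Nr α Λ R := Nat.cast_nonneg _

lemma g_integrable {α : ℝ} (hα : 0 < α) {Λ : Set (ℝ × ℝ)}
    (hloc : ∀ K : Set (ℝ × ℝ), IsCompact K → (Λ ∩ K).Finite) {M : ℝ} (hM : 0 < M) :
    IntegrableOn (fun t => Nr α Λ t * (t ^ 2)⁻¹) (Set.Ioc 0 M) := by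
  classical
  have hmeas : Measurable fun t : ℝ => Nr α Λ t * (t ^ 2)⁻¹ :=
    ((Nr_mono hα hloc).measurable).mul ((measurable_id.pow_const 2).inv)
  by_cases hemp : Pset α Λ M = ∅
  · have hz : ∀ t ∈ Set.Ioc (0:ℝ) M, Nr α Λ t * (t ^ 2)⁻¹ = 0 := by
      intro t ht
      have : Pset α Λ t = ∅ :=
        Set.subset_empty_iff.mp (hemp ▸ Pset_mono α Λ ht.2)
      simp [Nr, this]
    exact (MeasureTheory.integrableOn_zero).congr_fun (fun t ht => (hz t ht).symm)
      measurableSet_Ioc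
  · have hSne : (Pset_finite hα hloc M).toFinset.Nonempty := by
      rw [Set.Finite.toFinset_nonempty]
      exact Set.nonempty_iff_ne_empty.mpr hemp
    set H : Finset ℝ := (Pset_finite hα hloc M).toFinset.image Prod.snd with hHdef
    have hHne : H.Nonempty := hSne.image _
    set j₀ : ℝ := H.min' hHne with hj₀def
    obtain ⟨p₀, hp₀, hp₀2⟩ := Finset.mem_image.mp (H.min'_mem hHne)
    rw [Set.Finite.mem_toFinset] at hp₀
    have hj₀pos : 0 < j₀ := by rw [hj₀def, ← hp₀2]; exact hp₀.2.1
    have hj₀M : j₀ < M := by rw [hj₀def, ← hp₀2]; exact hp₀.2.2.1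
    have hzero : ∀ t ∈ Set.Ioc (0:ℝ) j₀, Nr α Λ t * (t ^ 2)⁻¹ = 0 := by
      intro t ht
      have hPe : Pset α Λ t = ∅ := by
        rw [Set.eq_empty_iff_forall_notMem]
        rintro p hp
        have hpM : p ∈ Pset α Λ M := Pset_mono α Λ (by linarith [ht.2] : t ≤ M) hp
        have : j₀ ≤ p.2 := H.min'_le _ (Finset.mem_image.mpr
          ⟨p, (Set.Finite.mem_toFinset _).mpr hpM, rfl⟩)
        have : p.2 < t := hp.2.2.1
        linarith [hp.2.2.1, H.min'_le p.2 (Finset.mem_image.mpr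
          ⟨p, (Set.Finite.mem_toFinset _).mpr hpM, rfl⟩), ht.2]
      simp [Nr, hPe]
    have h1 : IntegrableOn (fun t => Nr α Λ t * (t ^ 2)⁻¹) (Set.Ioc 0 j₀) :=
      (MeasureTheory.integrableOn_zero).congr_fun (fun t ht => (hzero t ht).symm)
        measurableSet_Ioc
    have h2 : IntegrableOn (fun t => Nr α Λ t * (t ^ 2)⁻¹) (Set.Ioc j₀ M) := by
      refine MeasureTheory.Measure.integrableOn_of_bounded
        (M := Nr α Λ M * (j₀ ^ 2)⁻¹)
        (by rw [Real.volume_Ioc]; exact ENNReal.ofReal_ne_top)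
        hmeas.aestronglyMeasurable ?_
      refine MeasureTheory.ae_restrict_of_forall_mem measurableSet_Ioc fun t ht => ?_
      have ht0 : 0 < t := lt_trans hj₀pos ht.1
      have h1' : Nr α Λ t ≤ Nr α Λ M := Nr_mono hα hloc ht.2
      have h2' : (t ^ 2)⁻¹ ≤ (j₀ ^ 2)⁻¹ := by
        apply inv_anti₀ (by positivity)
        nlinarith [ht.1.le]
      rw [Real.norm_eq_abs, abs_of_nonneg (mul_nonneg (Nr_nonneg _ _ _) (by positivity))]
      exact mul_le_mul h1' h2' (by positivity) (Nr_nonneg _ _ _)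
    have := h1.union h2
    rwa [Set.Ioc_union_Ioc_eq_Ioc hj₀pos.le hj₀M.le] at this

lemma sum_phi_eq_real {α : ℝ} (hα : 0 < α) {Λ : Set (ℝ × ℝ)} (hshear : shear α '' Λ = Λ)
    (hloc : ∀ K : Set (ℝ × ℝ), IsCompact K → (Λ ∩ K).Finite) (R : ℝ) :
    ∑ j ∈ (Jfin_finite hα hshear hloc R).toFinset, (phiCount α Λ j : ℝ) = Nr α Λ R := by
  rw [Nr, ← Nat.cast_sum, sum_phi_eq hα hshear hloc R]

lemma sum_div_eq {α : ℝ} (hα : 0 < α) {Λ : Set (ℝ × ℝ)} (hshear : shear α '' Λ = Λ)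
    (hloc : ∀ K : Set (ℝ × ℝ), IsCompact K → (Λ ∩ K).Finite) {R : ℝ} (hR : 0 < R) :
    ∑ᶠ j ∈ heightSet Λ ∩ Set.Ioo 0 R, (phiCount α Λ j : ℝ) / j
      = Nr α Λ R / R + ∫ t in Set.Ioc 0 R, Nr α Λ t * (t ^ 2)⁻¹ := by
  classical
  set J : Finset ℝ := (Jfin_finite hα hshear hloc R).toFinset with hJdef
  have hJmem : ∀ j ∈ J, 0 < j ∧ j < R := by
    intro j hj
    rw [hJdef, Set.Finite.mem_toFinset] at hj
    exact ⟨hj.2.1, hj.2.2⟩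
  -- basic integral of (t^2)⁻¹
  have hbase : ∀ j ∈ J, ∫ t in Set.Ioc j R, (t ^ 2)⁻¹ = j⁻¹ - R⁻¹ := by
    intro j hj
    obtain ⟨hj0, hjR⟩ := hJmem j hj
    have h0 : (0:ℝ) ∉ Set.uIcc j R := by
      rw [Set.uIcc_of_le hjR.le]
      simp only [Set.mem_Icc, not_and_or, not_le]
      exact Or.inl hj0
    have := integral_zpow (a := j) (b := R) (n := -2)
      (Or.inr ⟨by norm_num, h0⟩)
    rw [intervalIntegral.integral_of_le hjR.le] at this
    have heq : ∀ t : ℝ, t ^ (-2 : ℤ) = (t ^ 2)⁻¹ := by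
      intro t
      rw [zpow_neg]
      norm_cast
    simp only [heq] at this
    rw [this]
    have : ((-2 : ℤ) + 1 : ℝ) = -1 := by norm_num
    rw [show ((-2:ℤ) + 1 : ℤ) = -1 by norm_num]
    push_cast
    rw [zpow_neg, zpow_neg, zpow_one, zpow_one]
    ring
  -- integrability of each indicator summand
  have hind : ∀ j ∈ J, MeasureTheory.Integrable
      ((Set.Ioc j R).indicator (fun t => (phiCount α Λ j : ℝ) * (t ^ 2)⁻¹))
      (MeasureTheory.volume.restrict (Set.Ioc 0 R)) := by
    intro j hj
    obtain ⟨hj0, hjR⟩ := hJmem j hj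
    rw [MeasureTheory.integrable_indicator_iff measurableSet_Ioc]
    rw [MeasureTheory.IntegrableOn, MeasureTheory.Measure.restrict_restrict measurableSet_Ioc,
      Set.inter_eq_self_of_subset_left (Set.Ioc_subset_Ioc_left hj0.le)]
    have hcont : ContinuousOn (fun t : ℝ => (phiCount α Λ j : ℝ) * (t ^ 2)⁻¹)
        (Set.Icc j R) := by
      refine continuousOn_const.mul (((continuousOn_id.pow 2)).inv₀ fun x hx => ?_)
      exact pow_ne_zero 2 (ne_of_gt (lt_of_lt_of_le hj0 hx.1))
    exact (hcont.integrableOn_Icc).mono_set Set.Ioc_subset_Icc_self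
  -- rewrite finsum as Finset sum
  rw [finsum_mem_of_finite (Jfin_finite hα hshear hloc R)]
  have hsummand : ∀ j ∈ J, (phiCount α Λ j : ℝ) / j
      = (phiCount α Λ j : ℝ) * R⁻¹
        + ∫ t in Set.Ioc 0 R,
            (Set.Ioc j R).indicator (fun t => (phiCount α Λ j : ℝ) * (t ^ 2)⁻¹) t := by
    intro j hj
    obtain ⟨hj0, hjR⟩ := hJmem j hj
    rw [MeasureTheory.integral_indicator measurableSet_Ioc,
      MeasureTheory.Measure.restrict_restrict measurableSet_Ioc,
      Set.inter_eq_self_of_subset_left (Set.Ioc_subset_Ioc_left hj0.le)]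
    rw [MeasureTheory.integral_const_mul, hbase j hj]
    rw [div_eq_mul_inv]
    ring
  rw [Finset.sum_congr rfl hsummand, Finset.sum_add_distrib, ← Finset.sum_mul,
    sum_phi_eq_real hα hshear hloc R, ← div_eq_mul_inv,
    ← MeasureTheory.integral_finset_sum J hind]
  congr 1
  refine MeasureTheory.setIntegral_congr_fun measurableSet_Ioc fun t ht => ?_
  -- pointwise: sum of indicators equals Nr t * (t^2)⁻¹
  have hstep : ∀ j ∈ J, (Set.Ioc j R).indicator
      (fun t => (phiCount α Λ j : ℝ) * (t ^ 2)⁻¹) t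
        = if j < t then (phiCount α Λ j : ℝ) * (t ^ 2)⁻¹ else 0 := by
    intro j hj
    rw [Set.indicator_apply]
    congr 1
    simp only [Set.mem_Ioc, eq_iff_iff]
    exact and_iff_left ht.2
  rw [Finset.sum_congr rfl hstep, ← Finset.sum_filter, ← Finset.sum_mul]
  have hfilter : J.filter (· < t) = (Jfin_finite hα hshear hloc t).toFinset := by
    ext j
    simp only [Finset.mem_filter, hJdef, Set.Finite.mem_toFinset, Set.mem_inter_iff,
      Set.mem_Ioo]
    constructor
    · rintro ⟨⟨hH, hj0, hjR⟩, hjt⟩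
      exact ⟨hH, hj0, hjt⟩
    · rintro ⟨hH, hj0, hjt⟩
      exact ⟨⟨hH, hj0, lt_of_lt_of_le hjt ht.2⟩, hjt⟩
  rw [hfilter, sum_phi_eq_real hα hshear hloc t]

/-- Asymptotics of the geometric Euler totient function: if the number of
points of `Λ` in the triangle `T_R` is asymptotic to `c R²`, then
`Σ_{j ∈ J_R} φ(j) ∼ c R²` and `Σ_{j ∈ J_R} φ(j)/j ∼ 2 c R`. -/
theorem phi_asymptotics
    (α : ℝ) (hα : 0 < α) (Λ : Set (ℝ × ℝ))
    (hshear : shear α '' Λ = Λ)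
    (hloc : ∀ K : Set (ℝ × ℝ), IsCompact K → (Λ ∩ K).Finite)
    (c : ℝ) (hc : 0 < c)
    (hlim : Tendsto (fun R : ℝ =>
        (Nat.card {p : ℝ × ℝ | p ∈ Λ ∧ 0 < p.2 ∧ p.2 < R ∧ 0 ≤ p.1 ∧ p.1 < α * p.2} : ℝ)
          / R ^ 2) atTop (nhds c)) :
    Tendsto (fun R : ℝ =>
        (∑ᶠ j ∈ heightSet Λ ∩ Set.Ioo 0 R, (phiCount α Λ j : ℝ)) / R ^ 2)
      atTop (nhds c) ∧
    Tendsto (fun R : ℝ =>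
        (∑ᶠ j ∈ heightSet Λ ∩ Set.Ioo 0 R, (phiCount α Λ j : ℝ) / j) / R)
      atTop (nhds (2 * c)) := by
  have hlim' : Tendsto (fun R : ℝ => Nr α Λ R / R ^ 2) atTop (nhds c) := hlim
  constructor
  · have heq : (fun R : ℝ =>
        (∑ᶠ j ∈ heightSet Λ ∩ Set.Ioo 0 R, (phiCount α Λ j : ℝ)) / R ^ 2)
          = fun R : ℝ => Nr α Λ R / R ^ 2 :=
      funext fun R => by rw [finsum_phi hα hshear hloc R]; rfl
    rw [heq]
    exact hlim'
  · have hg : Tendsto (fun t : ℝ => Nr α Λ t * (t ^ 2)⁻¹) atTop (nhds c) := by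
      simpa [div_eq_mul_inv] using hlim'
    have hces := cesaro_integral_s7 (g := fun t => Nr α Λ t * (t ^ 2)⁻¹)
      (fun M hM => g_integrable hα hloc hM) hg
    have hsum : Tendsto (fun R : ℝ =>
        Nr α Λ R / R ^ 2 + (∫ t in Set.Ioc 0 R, Nr α Λ t * (t ^ 2)⁻¹) / R)
        atTop (nhds (c + c)) := hlim'.add hces
    rw [two_mul]
    refine hsum.congr' ?_
    filter_upwards [eventually_gt_atTop (0:ℝ)] with R hR
    rw [sum_div_eq hα hshear hloc hR, add_div, div_div, ← pow_two]
end

section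
/- Fix α > 0 and let Λ ⊆ ℝ² be α-shear-invariant and locally finite. Let j > 0 be an element of the height set J of Λ, let s > 0, and let a < b be real numbers with b − a < α·j·s. Then ∫_{1−αs}^{1} #( p_{s,t}(Λ) ∩ ([a,b) × {j/s}) ) dt = (b − a)·φ(j)/j, where the integrand is the (finite) number of points of the image p_{s,t}(Λ) lying in the horizontal segment [a,b) × {j/s}. -/
open MeasureTheory

/-- The linear map `p_{s,t}(x,y) = (sx + ty, y/s)`, i.e. the matrix
`[[s, t], [0, 1/s]]`. -/
noncomputable def pst (s t : ℝ) : ℝ × ℝ → ℝ × ℝ := fun p => (s * p.1 + t * p.2, p.2 / s)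

/-- Average number of points of `p_{s,t}(Λ)` in the horizontal segment
`[a,b) × {j/s}` over `t ∈ [1 - αs, 1]` is `(b - a) φ(j)/j`. -/
theorem average_points_horizontal_segment
    (α : ℝ) (hα : 0 < α) (Λ : Set (ℝ × ℝ))
    (hshear : shear α '' Λ = Λ)
    (hloc : ∀ K : Set (ℝ × ℝ), IsCompact K → (Λ ∩ K).Finite)
    (j : ℝ) (hj : 0 < j) (hjJ : ∃ x : ℝ, (x, j) ∈ Λ)
    (s : ℝ) (hs : 0 < s)
    (a b : ℝ) (hab : a < b) (hba : b - a < α * j * s) :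
    (∫ t in (1 - α * s)..1,
        (Nat.card {q : ℝ × ℝ | q ∈ pst s t '' Λ ∧
          q.1 ∈ Set.Ico a b ∧ q.2 = j / s} : ℝ))
      = (b - a) * (phiCount α Λ j : ℝ) / j := by
  classical
  have hp0 : 0 < α * j := mul_pos hα hj
  have hP0 : 0 < α * s := mul_pos hα hs
  have hL0 : 0 < (b - a) / j := div_pos (by linarith) hj
  have hLP : (b - a) / j < α * s := by
    rw [div_lt_iff₀ hj]; nlinarith
  -- one-step shear invariance at height j
  have step : ∀ x : ℝ, (x, j) ∈ Λ ↔ (x + α * j, j) ∈ Λ := by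
    intro x
    constructor
    · intro hx
      have : shear α (x, j) ∈ shear α '' Λ := ⟨(x, j), hx, rfl⟩
      rw [hshear] at this
      simpa [shear] using this
    · intro hx
      rw [← hshear] at hx
      obtain ⟨⟨u, v⟩, huv, he⟩ := hx
      simp only [shear, Prod.mk.injEq] at he
      have hv : v = j := he.2
      have hu : u = x := by
        have := he.1
        rw [hv] at this
        linarith
      rw [← hu, ← hv]; exact huv
  -- integer shifts preserve membership at height j
  have shiftZ : ∀ (n : ℤ) (x : ℝ), (x, j) ∈ Λ → (x + n * (α * j), j) ∈ Λ := by
    intro n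
    induction n using Int.induction_on with
    | zero => intro x hx; simpa using hx
    | succ k ih =>
      intro x hx
      have h1 := (step (x + (k : ℝ) * (α * j))).mp (ih x hx)
      have : x + ((k : ℤ) + 1 : ℤ) * (α * j) = x + (k : ℝ) * (α * j) + α * j := by
        push_cast; ring
      rw [this]; exact h1
    | pred k ih =>
      intro x hx
      have h1 : (x + (-(k : ℝ) - 1) * (α * j) + α * j, j) ∈ Λ := by
        have := ih x hx
        have he : x + (-(k : ℝ) - 1) * (α * j) + α * j = x + ((-k : ℤ) : ℝ) * (α * j) := by
          push_cast; ring
        rw [he]; exact this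
      have h2 := (step (x + (-(k : ℝ) - 1) * (α * j))).mpr h1
      have he2 : x + ((-(k : ℤ) - 1 : ℤ) : ℝ) * (α * j) = x + (-(k : ℝ) - 1) * (α * j) := by
        push_cast; ring
      rw [he2]; exact h2
  -- finiteness of horizontal slices
  have finX : ∀ lo hi : ℝ, {x : ℝ | (x, j) ∈ Λ ∧ x ∈ Set.Icc lo hi}.Finite := by
    intro lo hi
    have hK : IsCompact ((Set.Icc lo hi) ×ˢ ({j} : Set ℝ)) :=
      isCompact_Icc.prod isCompact_singleton
    have hfin := hloc _ hK
    have heq : {x : ℝ | (x, j) ∈ Λ ∧ x ∈ Set.Icc lo hi}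
        = (fun x : ℝ => (x, j)) ⁻¹' (Λ ∩ (Set.Icc lo hi ×ˢ ({j} : Set ℝ))) := by
      ext x
      simp [Set.mem_prod]
    rw [heq]
    exact hfin.preimage (Set.injOn_of_injective (fun x y hxy => congrArg Prod.fst hxy))
  -- the fundamental-domain point set
  have hF : {x : ℝ | (x, j) ∈ Λ ∧ 0 ≤ x ∧ x < α * j}.Finite := by
    refine (finX 0 (α * j)).subset ?_
    rintro x ⟨hx, h0, h1⟩
    exact ⟨hx, h0, h1.le⟩
  set F' : Finset ℝ := hF.toFinset with hF'def
  -- the time sets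
  set S : ℝ → Set ℝ := fun y => ⋃ n : ℤ,
      Set.Ico ((a - s * y) / j - n * (α * s)) ((a - s * y) / j - n * (α * s) + (b - a) / j)
    with hS_def
  have hSmeas : ∀ y, MeasurableSet (S y) := fun y =>
    MeasurableSet.iUnion fun n => measurableSet_Ico
  -- identities relating the two descriptions of S
  have hid1 : ∀ (y t : ℝ) (n : ℤ),
      s * (y + (n : ℝ) * (α * j)) + t * j - a = j * (t - ((a - s * y) / j - (n : ℝ) * (α * s))) := by
    intro y t n
    field_simp
    ring
  have hid2 : ∀ (y t : ℝ) (n : ℤ),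
      b - (s * (y + (n : ℝ) * (α * j)) + t * j)
        = j * (((a - s * y) / j - (n : ℝ) * (α * s) + (b - a) / j) - t) := by
    intro y t n
    field_simp
    ring
  have hS_iff : ∀ y t : ℝ, t ∈ S y ↔
      ∃ n : ℤ, a ≤ s * (y + (n : ℝ) * (α * j)) + t * j ∧ s * (y + (n : ℝ) * (α * j)) + t * j < b := by
    intro y t
    rw [hS_def]
    simp only [Set.mem_iUnion, Set.mem_Ico]
    constructor
    · rintro ⟨n, h1, h2⟩
      refine ⟨n, ?_, ?_⟩
      · have := hid1 y t n
        nlinarith [mul_nonneg hj.le (sub_nonneg.2 h1)]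
      · have := hid2 y t n
        nlinarith [mul_pos hj (sub_pos.2 h2)]
    · rintro ⟨n, h1, h2⟩
      refine ⟨n, ?_, ?_⟩
      · have h3 := hid1 y t n
        have h4 : 0 ≤ j * (t - ((a - s * y) / j - (n : ℝ) * (α * s))) := by linarith
        nlinarith
      · have h3 := hid2 y t n
        have h4 : 0 < j * (((a - s * y) / j - (n : ℝ) * (α * s) + (b - a) / j) - t) := by linarith
        nlinarith
  -- the key counting identity
  have keyN : ∀ t : ℝ, Nat.card {q : ℝ × ℝ | q ∈ pst s t '' Λ ∧
      q.1 ∈ Set.Ico a b ∧ q.2 = j / s}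
      = ∑ y ∈ F', (if t ∈ S y then 1 else 0) := by
    intro t
    have hTfin : {x : ℝ | (x, j) ∈ Λ ∧ a ≤ s * x + t * j ∧ s * x + t * j < b}.Finite := by
      refine (finX ((a - t * j) / s) ((b - t * j) / s)).subset ?_
      rintro x ⟨hx, h1, h2⟩
      refine ⟨hx, ?_, ?_⟩
      · rw [div_le_iff₀ hs]; linarith
      · rw [le_div_iff₀ hs]; linarith
    have hinj : Function.Injective (fun x : ℝ => ((s * x + t * j, j / s) : ℝ × ℝ)) := by
      intro x1 x2 h
      have h1 : s * x1 + t * j = s * x2 + t * j := congrArg Prod.fst h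
      have := mul_left_cancel₀ hs.ne' (show s * x1 = s * x2 by linarith)
      exact this
    have hQeq : {q : ℝ × ℝ | q ∈ pst s t '' Λ ∧ q.1 ∈ Set.Ico a b ∧ q.2 = j / s}
        = (fun x : ℝ => ((s * x + t * j, j / s) : ℝ × ℝ)) ''
          {x : ℝ | (x, j) ∈ Λ ∧ a ≤ s * x + t * j ∧ s * x + t * j < b} := by
      ext q
      constructor
      · rintro ⟨⟨⟨u, v⟩, huv, rfl⟩, hx, hy⟩
        simp only [pst, Set.mem_Ico] at hx hy ⊢
        have hv : v = j := by
          have : v / s * s = j / s * s := by rw [hy]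
          rwa [div_mul_cancel₀ _ hs.ne', div_mul_cancel₀ _ hs.ne'] at this
        subst hv
        exact ⟨u, ⟨huv, hx.1, hx.2⟩, rfl⟩
      · rintro ⟨x, ⟨hxΛ, h1, h2⟩, rfl⟩
        exact ⟨⟨(x, j), hxΛ, by simp [pst]⟩, ⟨h1, h2⟩, rfl⟩
    rw [hQeq, Nat.card_image_of_injective hinj _, Nat.card_coe_set_eq,
      Set.ncard_eq_toFinset_card _ hTfin]
    have hmaps : ∀ x ∈ hTfin.toFinset,
        (fun x : ℝ => x - ⌊x / (α * j)⌋ * (α * j)) x ∈ F' := by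
      intro x hx
      rw [Set.Finite.mem_toFinset] at hx
      rw [hF'def, Set.Finite.mem_toFinset]
      refine ⟨?_, Int.sub_floor_div_mul_nonneg x hp0, Int.sub_floor_div_mul_lt x hp0⟩
      show (x - (⌊x / (α * j)⌋ : ℝ) * (α * j), j) ∈ Λ
      have he : x - (⌊x / (α * j)⌋ : ℝ) * (α * j) = x + ((-⌊x / (α * j)⌋ : ℤ) : ℝ) * (α * j) := by
        push_cast; ring
      rw [he]
      exact shiftZ _ x hx.1
    rw [Finset.card_eq_sum_card_fiberwise hmaps]
    refine Finset.sum_congr rfl fun y hy => ?_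
    rw [hF'def, Set.Finite.mem_toFinset] at hy
    obtain ⟨hyΛ, hy0, hy1⟩ := hy
    split_ifs with ht
    · -- exactly one point in the fiber
      rw [hS_iff] at ht
      obtain ⟨n, hn1, hn2⟩ := ht
      rw [Finset.card_eq_one]
      refine ⟨y + (n : ℝ) * (α * j), ?_⟩
      ext x
      simp only [Finset.mem_filter, Set.Finite.mem_toFinset, Set.mem_setOf_eq,
        Finset.mem_singleton]
      constructor
      · rintro ⟨⟨hxΛ, hx1, hx2⟩, hr⟩
        -- x = y + m * (α j) with m = ⌊x/(αj)⌋
        have hxeq : x = y + (⌊x / (α * j)⌋ : ℝ) * (α * j) := by linarith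
        set m : ℤ := ⌊x / (α * j)⌋ with hm
        have hdiff : x - (y + (n : ℝ) * (α * j)) = ((m - n : ℤ) : ℝ) * (α * j) := by
          push_cast
          rw [hxeq]
          ring
        have h8 : s * x - s * (y + (n : ℝ) * (α * j)) = ((m - n : ℤ) : ℝ) * (α * j * s) := by
          linear_combination s * hdiff
        have hlow : a - b < s * x - s * (y + (n : ℝ) * (α * j)) := by linarith
        have hup : s * x - s * (y + (n : ℝ) * (α * j)) < b - a := by linarith
        have hmn : m = n := by
          rcases lt_trichotomy (m - n) 0 with h | h | h
          · exfalso
            have hc : ((m - n : ℤ) : ℝ) ≤ -1 := by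
              have : m - n ≤ -1 := by omega
              exact_mod_cast this
            have := mul_le_mul_of_nonneg_right hc (mul_pos hp0 hs).le
            nlinarith
          · omega
          · exfalso
            have hc : (1 : ℝ) ≤ ((m - n : ℤ) : ℝ) := by
              have : 1 ≤ m - n := by omega
              exact_mod_cast this
            have := mul_le_mul_of_nonneg_right hc (mul_pos hp0 hs).le
            nlinarith
        rw [hxeq, hmn]
      · rintro rfl
        refine ⟨⟨shiftZ n y hyΛ, hn1, hn2⟩, ?_⟩
        have hfl : ⌊(y + (n : ℝ) * (α * j)) / (α * j)⌋ = n := by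
          have hdiv : (y + (n : ℝ) * (α * j)) / (α * j) = y / (α * j) + (n : ℝ) := by
            field_simp
          rw [hdiv, Int.floor_add_intCast, Int.floor_eq_zero_iff.mpr, zero_add]
          constructor
          · exact div_nonneg hy0 hp0.le
          · rw [div_lt_one hp0]; exact hy1
        rw [hfl]
        ring
    · -- empty fiber
      rw [Finset.card_eq_zero, Finset.filter_eq_empty_iff]
      intro x hx
      rw [Set.Finite.mem_toFinset] at hx
      intro hr
      apply ht
      rw [hS_iff]
      refine ⟨⌊x / (α * j)⌋, ?_⟩
      have hxeq : y + (⌊x / (α * j)⌋ : ℝ) * (α * j) = x := by linarith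
      rw [hxeq]
      exact ⟨hx.2.1, hx.2.2⟩
  -- rewrite the integrand
  have keyR : ∀ t : ℝ, ((Nat.card {q : ℝ × ℝ | q ∈ pst s t '' Λ ∧
      q.1 ∈ Set.Ico a b ∧ q.2 = j / s} : ℕ) : ℝ)
      = ∑ y ∈ F', Set.indicator (S y) (fun _ => (1 : ℝ)) t := by
    intro t
    rw [keyN t]
    push_cast
    refine Finset.sum_congr rfl fun y _ => ?_
    simp [Set.indicator_apply]
  rw [intervalIntegral.integral_congr
    (g := fun t => ∑ y ∈ F', Set.indicator (S y) (fun _ => (1 : ℝ)) t)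
    (fun t _ => keyR t)]
  -- integrability of each indicator
  have hint : ∀ y, ∀ u v : ℝ, IntervalIntegrable
      (Set.indicator (S y) (fun _ => (1 : ℝ))) volume u v := by
    intro y u v
    rw [intervalIntegrable_iff]
    apply (integrable_indicator_iff (hSmeas y)).mpr
    rw [integrableOn_const_iff]
    right
    calc (volume.restrict (Set.uIoc u v)) (S y)
        ≤ volume (Set.uIoc u v) := by
          rw [Measure.restrict_apply (hSmeas y)]
          exact measure_mono Set.inter_subset_right
      _ < ⊤ := measure_Ioc_lt_top
  rw [intervalIntegral.integral_finset_sum (fun y _ => hint y _ _)]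
  -- each summand integrates to (b-a)/j
  have heach : ∀ y ∈ F', (∫ t in (1 - α * s)..1, Set.indicator (S y) (fun _ => (1 : ℝ)) t)
      = (b - a) / j := by
    intro y hy
    -- periodicity
    have hSper : ∀ t, t + α * s ∈ S y ↔ t ∈ S y := by
      intro t
      rw [hS_def]
      simp only [Set.mem_iUnion, Set.mem_Ico]
      constructor
      · rintro ⟨n, h1, h2⟩
        refine ⟨n + 1, ?_, ?_⟩ <;> push_cast <;> [linarith; linarith]
      · rintro ⟨n, h1, h2⟩
        refine ⟨n - 1, ?_, ?_⟩ <;> push_cast <;> [linarith; linarith]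
    have hper : Function.Periodic (Set.indicator (S y) (fun _ => (1 : ℝ))) (α * s) := by
      intro t
      by_cases h : t ∈ S y
      · rw [Set.indicator_of_mem h, Set.indicator_of_mem ((hSper t).mpr h)]
      · rw [Set.indicator_of_notMem h,
          Set.indicator_of_notMem (fun hc => h ((hSper t).mp hc))]
    set c : ℝ := (a - s * y) / j with hc_def
    have hper_eq := hper.intervalIntegral_add_eq (1 - α * s) c
    rw [show (1 - α * s) + α * s = 1 by ring] at hper_eq
    rw [hper_eq]
    rw [intervalIntegral.integral_of_le (by linarith : c ≤ c + α * s)]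
    rw [setIntegral_indicator (hSmeas y)]
    have hset : Set.Ioc c (c + α * s) ∩ S y
        = Set.Ioo c (c + (b - a) / j) ∪ {c + α * s} := by
      ext t
      simp only [Set.mem_inter_iff, Set.mem_Ioc, hS_def, Set.mem_iUnion, Set.mem_Ico,
        Set.mem_union, Set.mem_Ioo, Set.mem_singleton_iff, ← hc_def]
      constructor
      · rintro ⟨⟨ht1, ht2⟩, n, hn1, hn2⟩
        rcases lt_trichotomy n 0 with h | h | h
        · right
          have hcast : ((n : ℤ) : ℝ) ≤ -1 := by
            have : n ≤ -1 := by omega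
            exact_mod_cast this
          have := mul_le_mul_of_nonneg_right hcast hP0.le
          have h5 : c + α * s ≤ t := by nlinarith
          linarith
        · left
          subst h
          push_cast at hn1 hn2
          constructor <;> linarith
        · exfalso
          have hcast : (1 : ℝ) ≤ ((n : ℤ) : ℝ) := by
            have : 1 ≤ n := by omega
            exact_mod_cast this
          have := mul_le_mul_of_nonneg_right hcast hP0.le
          nlinarith
      · rintro (⟨h1, h2⟩ | rfl)
        · refine ⟨⟨h1, by linarith⟩, 0, ?_, ?_⟩ <;> push_cast <;> linarith
        · refine ⟨⟨by linarith, le_refl _⟩, -1, ?_, ?_⟩ <;> push_cast <;> linarith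
    rw [hset]
    rw [setIntegral_const]
    rw [measureReal_def]
    rw [measure_union ?hdisj (measurableSet_singleton _)]
    case hdisj =>
      rw [Set.disjoint_singleton_right]
      simp only [Set.mem_Ioo, not_and, not_lt]
      intro _
      linarith
    rw [Real.volume_Ioo, Real.volume_singleton, add_zero, smul_eq_mul, mul_one,
      ENNReal.toReal_ofReal (by linarith)]
    ring
  rw [Finset.sum_congr rfl heach, Finset.sum_const, nsmul_eq_mul]
  -- identify the cardinality with phiCount
  have hcard : (F'.card : ℝ) = (phiCount α Λ j : ℝ) := by
    rw [phiCount, Nat.card_coe_set_eq, Set.ncard_eq_toFinset_card _ hF, hF'def]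
  rw [hcard]
  ring
end

section
/- Fix α > 0 and let Λ ⊆ ℝ² be α-shear-invariant and locally finite, with height set J. Let s₀ ∈ (0,1), and let ζ₁ > 0 satisfy ζ₁ ≤ j for all j ∈ J. Let a < b with b − a < ζ₁·α·s₀, let c > 0, and set A = [a,b) × (0,c). Then ∫_{s₀}^{1} ∫_{1−αs}^{1} #( p_{s,t}(Λ) ∩ A ) dt ds = (b − a) · ∫_{s₀}^{1} ( Σ_{j ∈ J, j < cs} φ(j)/j ) ds, where #( p_{s,t}(Λ) ∩ A ) is the (finite) number of points of the image p_{s,t}(Λ) lying in A, and for each s the inner sum is a finite sum over the finite set J ∩ (0, cs). -/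
open MeasureTheory

/- ---------- auxiliary definitions ---------- -/

def Dset (α : ℝ) (Λ : Set (ℝ × ℝ)) (c s : ℝ) : Set (ℝ × ℝ) :=
  {p | p ∈ Λ ∧ 0 ≤ p.1 ∧ p.1 < α * p.2 ∧ 0 < p.2 ∧ p.2 < c * s}

def Cset (Λ : Set (ℝ × ℝ)) (s t a b c : ℝ) : Set (ℝ × ℝ) :=
  {q | q ∈ Λ ∧ a ≤ s * q.1 + t * q.2 ∧ s * q.1 + t * q.2 < b ∧ 0 < q.2 ∧ q.2 < c * s}

def Kset (α s t a b : ℝ) (p : ℝ × ℝ) : Set ℤ :=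
  {k : ℤ | a ≤ s * (p.1 + α * p.2 * k) + t * p.2 ∧ s * (p.1 + α * p.2 * k) + t * p.2 < b}

def Gset (α s t a b : ℝ) (p : ℝ × ℝ) : Set (ℝ × ℝ) :=
  (fun k : ℤ => (p.1 + α * p.2 * k, p.2)) '' Kset α s t a b p

def Eset (α s a b : ℝ) (p : ℝ × ℝ) : Set ℝ :=
  {τ : ℝ | Int.fract ((τ - (a - s * p.1) / p.2) / (α * s)) < (b - a) / p.2 / (α * s)}

/- ---------- auxiliary lemmas ---------- -/

lemma integral_fract_indicator (w L p : ℝ) (hp : 0 < p) (hL : 0 < L) (hLp : L ≤ p) :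
    ∫ t in (1-p)..1, ({t : ℝ | Int.fract ((t - w)/p) < L/p}).indicator (fun _ => (1:ℝ)) t = L := by
  set E : Set ℝ := {t : ℝ | Int.fract ((t - w)/p) < L/p} with hE
  set f : ℝ → ℝ := E.indicator (fun _ => (1:ℝ)) with hf
  have hper : Function.Periodic f p := by
    intro t
    have hmem : (t + p) ∈ E ↔ t ∈ E := by
      simp only [hE, Set.mem_setOf_eq]
      have : (t + p - w)/p = (t - w)/p + 1 := by field_simp; ring
      rw [this, Int.fract_add_one]
    simp only [hf, Set.indicator_apply, hmem]
  have h1 : (∫ t in (1-p)..1, f t) = ∫ t in w..(w+p), f t := by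
    have h := hper.intervalIntegral_add_eq (1-p) w
    rwa [sub_add_cancel] at h
  rw [h1, intervalIntegral.integral_of_le (by linarith : w ≤ w + p)]
  have hae : f =ᵐ[volume.restrict (Set.Ioc w (w+p))]
      (Set.Ioo w (w+L)).indicator (fun _ => (1:ℝ)) := by
    have hnull : volume ({w + p} : Set ℝ) = 0 := measure_singleton _
    refine (ae_restrict_iff' measurableSet_Ioc).2 ?_
    have : ∀ᵐ t : ℝ, t ≠ w + p := by
      rw [ae_iff]; simpa using hnull
    filter_upwards [this] with t htne htmem
    have hlt : t < w + p := lt_of_le_of_ne htmem.2 htne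
    have hgt : w < t := htmem.1
    have hfr : Int.fract ((t - w)/p) = (t - w)/p := by
      apply Int.fract_eq_self.2
      constructor
      · exact div_nonneg (by linarith) hp.le
      · rw [div_lt_one hp]; linarith
    have hcond : t ∈ E ↔ t ∈ Set.Ioo w (w+L) := by
      simp only [hE, Set.mem_setOf_eq, Set.mem_Ioo, hfr]
      rw [div_lt_div_iff_of_pos_right hp]
      constructor
      · intro h; exact ⟨hgt, by linarith⟩
      · intro h; linarith [h.2]
    simp only [hf, Set.indicator_apply, hcond]
  rw [integral_congr_ae hae, setIntegral_indicator measurableSet_Ioo]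
  have hint : Set.Ioc w (w+p) ∩ Set.Ioo w (w+L) = Set.Ioo w (w+L) := by
    apply Set.inter_eq_right.2
    intro t ht
    exact ⟨ht.1, le_of_lt (lt_of_lt_of_le ht.2 (by linarith))⟩
  rw [hint]
  simp [Real.volume_Ioo, ENNReal.toReal_ofReal hL.le, hL.le]

lemma aux_ncard_biUnion {ι X : Type*} (T : Finset ι) (S : ι → Set X)
    (hfin : ∀ i ∈ T, (S i).Finite)
    (hdisj : ∀ i ∈ T, ∀ j ∈ T, i ≠ j → Disjoint (S i) (S j)) :
    (⋃ i ∈ T, S i).ncard = ∑ i ∈ T, (S i).ncard := by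
  classical
  induction T using Finset.induction_on with
  | empty => simp
  | @insert a T ha ih =>
    rw [Finset.sum_insert ha]
    have hU : (⋃ i ∈ insert a T, S i) = S a ∪ ⋃ i ∈ T, S i := by
      simp [Set.biUnion_insert]
    have hfinU : (⋃ i ∈ T, S i).Finite :=
      Set.Finite.biUnion T.finite_toSet
        (fun i hi => hfin i (Finset.mem_insert_of_mem hi))
    have hdisjU : Disjoint (S a) (⋃ i ∈ T, S i) := by
      rw [Set.disjoint_iUnion₂_right]
      intro i hi
      exact hdisj a (Finset.mem_insert_self a T) i (Finset.mem_insert_of_mem hi)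
        (by rintro rfl; exact ha hi)
    rw [hU, Set.ncard_union_eq hdisjU (hfin a (Finset.mem_insert_self a T)) hfinU,
      ih (fun i hi => hfin i (Finset.mem_insert_of_mem hi))
        (fun i hi j hj hij => hdisj i (Finset.mem_insert_of_mem hi) j
          (Finset.mem_insert_of_mem hj) hij)]

lemma shear_iterate {α : ℝ} {Λ : Set (ℝ × ℝ)} (hshear : shear α '' Λ = Λ)
    {x j : ℝ} (hx : (x, j) ∈ Λ) (k : ℤ) : (x + α * j * k, j) ∈ Λ := by
  have fwd : ∀ y : ℝ, (y, j) ∈ Λ → (y + α * j, j) ∈ Λ := by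
    intro y hy
    have h : shear α (y, j) ∈ shear α '' Λ := Set.mem_image_of_mem _ hy
    rw [hshear] at h
    simpa [shear] using h
  have bwd : ∀ y : ℝ, (y, j) ∈ Λ → (y - α * j, j) ∈ Λ := by
    intro y hy
    rw [← hshear] at hy
    obtain ⟨⟨qx, qy⟩, hq, he⟩ := hy
    simp only [shear, Prod.mk.injEq] at he
    obtain ⟨he1, he2⟩ := he
    have hqq : (y - α * j, j) = (qx, qy) := by
      rw [Prod.mk.injEq]
      refine ⟨?_, he2.symm⟩
      rw [he2] at he1
      linarith
    rw [hqq]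
    exact hq
  induction k using Int.induction_on with
  | zero => simpa using hx
  | succ n ih =>
    have h := fwd _ ih
    have he : x + α * j * ((n : ℤ) + 1 : ℤ) = x + α * j * (n : ℤ) + α * j := by
      push_cast; ring
    rw [he]; exact h
  | pred n ih =>
    have h := bwd _ ih
    have he : x + α * j * (-(n : ℤ) - 1 : ℤ) = x + α * j * (-(n : ℤ) : ℤ) - α * j := by
      push_cast; ring
    rw [he]; exact h

lemma reduce_point {α : ℝ} (hα : 0 < α) {Λ : Set (ℝ × ℝ)} (hshear : shear α '' Λ = Λ)
    {y j : ℝ} (hj : 0 < j) (hy : (y, j) ∈ Λ) :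
    ∃ x : ℝ, (x, j) ∈ Λ ∧ 0 ≤ x ∧ x < α * j ∧ ∃ k : ℤ, y = x + α * j * k := by
  have hαj : 0 < α * j := mul_pos hα hj
  set k := ⌊y / (α * j)⌋ with hk
  have h1 : (k : ℝ) * (α * j) ≤ y := by
    have h := Int.floor_le (y / (α * j))
    rw [← div_mul_cancel₀ y (ne_of_gt hαj)]
    exact mul_le_mul_of_nonneg_right h hαj.le
  have h2 : y < ((k : ℝ) + 1) * (α * j) := by
    have h := Int.lt_floor_add_one (y / (α * j))
    rw [← div_mul_cancel₀ y (ne_of_gt hαj)]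
    exact mul_lt_mul_of_pos_right h hαj
  refine ⟨y - α * j * k, ?_, by nlinarith, by nlinarith, k, by ring⟩
  have h := shear_iterate hshear hy (-k)
  have he : y + α * j * ((-k : ℤ) : ℝ) = y - α * j * k := by push_cast; ring
  rwa [he] at h

/- ---------- main theorem ---------- -/

set_option maxHeartbeats 1000000 in
/-- The double integral over `(s,t)` of the number of points of `p_{s,t}(Λ)`
in the thin box `A = [a,b) × (0,c)` equals
`(b - a) ∫_{s₀}^1 Σ_{j ∈ J, j < cs} φ(j)/j ds`. -/
theorem double_integral_points_in_box
    (α : ℝ) (hα : 0 < α) (Λ : Set (ℝ × ℝ))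
    (hshear : shear α '' Λ = Λ)
    (hloc : ∀ K : Set (ℝ × ℝ), IsCompact K → (Λ ∩ K).Finite)
    (s₀ : ℝ) (hs₀ : s₀ ∈ Set.Ioo (0 : ℝ) 1)
    (ζ₁ : ℝ) (hζ₁ : 0 < ζ₁) (hζ₁J : ∀ j ∈ heightSet Λ, ζ₁ ≤ j)
    (a b : ℝ) (hab : a < b) (hba : b - a < ζ₁ * α * s₀)
    (c : ℝ) (hc : 0 < c) :
    (∫ s in s₀..1, ∫ t in (1 - α * s)..1,
        (Nat.card {q : ℝ × ℝ | q ∈ pst s t '' Λ ∧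
          q.1 ∈ Set.Ico a b ∧ q.2 ∈ Set.Ioo 0 c} : ℝ))
      = (b - a) * ∫ s in s₀..1,
          (∑ᶠ j ∈ heightSet Λ ∩ Set.Ioo 0 (c * s), (phiCount α Λ j : ℝ) / j) := by
  have key : Set.EqOn
      (fun s => ∫ t in (1 - α * s)..1,
        (Nat.card {q : ℝ × ℝ | q ∈ pst s t '' Λ ∧
          q.1 ∈ Set.Ico a b ∧ q.2 ∈ Set.Ioo 0 c} : ℝ))
      (fun s => (b - a) *
        ∑ᶠ j ∈ heightSet Λ ∩ Set.Ioo 0 (c * s), (phiCount α Λ j : ℝ) / j)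
      (Set.uIcc s₀ 1) := by
    intro s hsmem
    rw [Set.uIcc_of_le hs₀.2.le] at hsmem
    obtain ⟨hs1, hs2⟩ := hsmem
    have hspos : 0 < s := hs₀.1.trans_le hs1
    have hαs : 0 < α * s := mul_pos hα hspos
    have hcs : 0 < c * s := mul_pos hc hspos
    simp only
    -- D is finite
    have hDfin : (Dset α Λ c s).Finite := by
      apply Set.Finite.subset
        (hloc (Set.Icc 0 (α * (c * s)) ×ˢ Set.Icc 0 (c * s))
          (isCompact_Icc.prod isCompact_Icc))
      rintro ⟨x, j⟩ ⟨hΛ, hx0, hxα, hj0, hjc⟩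
      refine ⟨hΛ, ⟨hx0, ?_⟩, ⟨hj0.le, hjc.le⟩⟩
      have : α * j ≤ α * (c * s) := mul_le_mul_of_nonneg_left hjc.le hα.le
      linarith
    -- the key per-point lemma
    have hKboth : ∀ t : ℝ, ∀ p ∈ hDfin.toFinset, (Kset α s t a b p).Finite ∧
        ((Kset α s t a b p).ncard : ℝ) = (Eset α s a b p).indicator (fun _ => (1:ℝ)) t := by
      intro t p hp
      rw [Set.Finite.mem_toFinset] at hp
      obtain ⟨hpΛ, hp0, hpα, hp2, hpc⟩ := hp
      have hζp : ζ₁ ≤ p.2 := hζ₁J p.2 ⟨hp2, p.1, hpΛ⟩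
      have hP : (0:ℝ) < α * s * p.2 := by positivity
      set u : ℝ := ((a - s * p.1) / p.2 - t) / (α * s) with hu
      set L : ℝ := (b - a) / p.2 with hL
      have hLpos : 0 < L := div_pos (by linarith) hp2
      have hL1 : L / (α * s) < 1 := by
        rw [div_lt_one hαs, hL, div_lt_iff₀ hp2]
        have h1 : ζ₁ * s₀ ≤ p.2 * s := mul_le_mul hζp hs1 hs₀.1.le hp2.le
        have h2 : α * (ζ₁ * s₀) ≤ α * (p.2 * s) := mul_le_mul_of_nonneg_left h1 hα.le
        nlinarith
      have e1 : u * (α * s * p.2) = a - s * p.1 - t * p.2 := by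
        rw [hu]; field_simp
      have e2 : L / (α * s) * (α * s * p.2) = b - a := by
        rw [hL, div_div, div_mul_eq_mul_div, mul_div_assoc,
          show α * s * p.2 = p.2 * (α * s) by ring,
          div_self (by positivity : (0:ℝ) < p.2 * (α * s)).ne', mul_one]
      have hmem : ∀ k : ℤ, k ∈ Kset α s t a b p ↔
          (u ≤ (k:ℝ) ∧ (k:ℝ) < u + L / (α * s)) := by
        intro k
        simp only [Kset, Set.mem_setOf_eq]
        constructor
        · rintro ⟨h1, h2⟩
          constructor
          · nlinarith
          · nlinarith
        · rintro ⟨h1, h2⟩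
          constructor
          · nlinarith
          · nlinarith
      have hchar : ∀ k : ℤ, k ∈ Kset α s t a b p ↔
          (k = ⌈u⌉ ∧ (⌈u⌉:ℝ) < u + L / (α * s)) := by
        intro k
        rw [hmem]
        constructor
        · rintro ⟨h1, h2⟩
          have hk1 : ⌈u⌉ ≤ k := Int.ceil_le.2 h1
          have hk2 : k ≤ ⌈u⌉ := by
            have hkr : (k:ℝ) < (⌈u⌉:ℝ) + 1 := by nlinarith [Int.le_ceil u]
            have hki : k < ⌈u⌉ + 1 := by exact_mod_cast hkr
            omega
          have hkc : k = ⌈u⌉ := le_antisymm hk2 hk1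
          exact ⟨hkc, hkc ▸ h2⟩
        · rintro ⟨rfl, h2⟩
          exact ⟨Int.le_ceil u, h2⟩
      have hKval : Kset α s t a b p =
          if (⌈u⌉:ℝ) < u + L / (α * s) then ({⌈u⌉} : Set ℤ) else ∅ := by
        split_ifs with hcond
        · ext k; rw [hchar k]; simp [hcond]
        · ext k; rw [hchar k]; simp [hcond]
      have hfr : Int.fract ((t - (a - s * p.1) / p.2) / (α * s)) = (⌈u⌉:ℝ) - u := by
        have hnu : (t - (a - s * p.1) / p.2) / (α * s) = -u := by rw [hu]; ring
        rw [hnu, Int.fract, Int.floor_neg]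
        push_cast
        ring
      have htE : t ∈ Eset α s a b p ↔ (⌈u⌉:ℝ) < u + L / (α * s) := by
        simp only [Eset, Set.mem_setOf_eq, hfr, ← hL]
        constructor <;> intro h <;> linarith
      constructor
      · rw [hKval]
        split_ifs
        · exact Set.finite_singleton _
        · exact Set.finite_empty
      · rw [hKval]
        by_cases hcond : (⌈u⌉:ℝ) < u + L / (α * s)
        · rw [if_pos hcond, Set.indicator_of_mem (htE.2 hcond), Set.ncard_singleton]
          norm_num
        · rw [if_neg hcond, Set.indicator_of_notMem (fun h => hcond (htE.1 h)),
            Set.ncard_empty]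
          norm_num
    -- the pointwise count
    have hcount : ∀ t : ℝ,
        ((Nat.card {q : ℝ × ℝ | q ∈ pst s t '' Λ ∧
          q.1 ∈ Set.Ico a b ∧ q.2 ∈ Set.Ioo 0 c}) : ℝ)
        = ∑ p ∈ hDfin.toFinset, (Eset α s a b p).indicator (fun _ => (1:ℝ)) t := by
      intro t
      have hpstinj : Function.Injective (pst s t) := by
        rintro ⟨x, y⟩ ⟨x', y'⟩ h
        simp only [pst, Prod.mk.injEq] at h
        obtain ⟨h1, h2⟩ := h
        have hy : y = y' := by
          field_simp [hspos.ne'] at h2; exact h2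
        subst hy
        have hx : x = x' := by
          have hsx : s * x = s * x' := by linarith
          exact mul_left_cancel₀ hspos.ne' hsx
        simp [hx]
      have hCeq : {q : ℝ × ℝ | q ∈ pst s t '' Λ ∧
          q.1 ∈ Set.Ico a b ∧ q.2 ∈ Set.Ioo 0 c} = pst s t '' Cset Λ s t a b c := by
        ext q
        simp only [Set.mem_setOf_eq, Set.mem_image, Set.mem_Ico, Set.mem_Ioo, Cset]
        constructor
        · rintro ⟨⟨p, hpΛ, rfl⟩, h1, h2⟩
          simp only [pst] at h1 h2 ⊢
          refine ⟨p, ⟨hpΛ, h1.1, h1.2, ?_, ?_⟩, rfl⟩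
          · have hpos : 0 < p.2 / s * s := mul_pos h2.1 hspos
            rwa [div_mul_cancel₀ _ hspos.ne'] at hpos
          · exact (div_lt_iff₀ hspos).1 h2.2
        · rintro ⟨p, ⟨hpΛ, h1, h2, h3, h4⟩, rfl⟩
          simp only [pst]
          exact ⟨⟨p, hpΛ, rfl⟩, ⟨h1, h2⟩, div_pos h3 hspos, (div_lt_iff₀ hspos).2 h4⟩
      have hCun : Cset Λ s t a b c = ⋃ p ∈ hDfin.toFinset, Gset α s t a b p := by
        ext q
        simp only [Set.mem_iUnion, Set.Finite.mem_toFinset]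
        simp only [Cset, Set.mem_setOf_eq, Set.mem_iUnion, Set.Finite.mem_toFinset, Gset,
          Set.mem_image, Kset, Dset]
        constructor
        · rintro ⟨hqΛ, h1, h2, h3, h4⟩
          obtain ⟨x, hxΛ, hx0, hxα, k, hyk⟩ := reduce_point hα hshear h3 hqΛ
          refine ⟨(x, q.2), ⟨hxΛ, hx0, hxα, h3, h4⟩, k, ⟨?_, ?_⟩, ?_⟩
          · rw [← hyk]; exact h1
          · rw [← hyk]; exact h2
          · exact Prod.ext_iff.2 ⟨hyk.symm, rfl⟩
        · rintro ⟨p, ⟨hpΛ, hp0, hpα, hp2, hpc⟩, k, ⟨hk1, hk2⟩, rfl⟩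
          exact ⟨shear_iterate (x := p.1) (j := p.2) hshear hpΛ k, hk1, hk2, hp2, hpc⟩
      have hGfin : ∀ p ∈ hDfin.toFinset, (Gset α s t a b p).Finite :=
        fun p hp => ((hKboth t p hp).1).image _
      have hGdisj : ∀ p ∈ hDfin.toFinset, ∀ p' ∈ hDfin.toFinset, p ≠ p' →
          Disjoint (Gset α s t a b p) (Gset α s t a b p') := by
        intro p hp p' hp' hne
        rw [Set.Finite.mem_toFinset] at hp hp'
        obtain ⟨hpΛ, hp0, hpα, hp2, hpc⟩ := hp
        obtain ⟨hp'Λ, hp'0, hp'α, hp'2, hp'c⟩ := hp'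
        rw [Set.disjoint_left]
        rintro q ⟨k, hk, rfl⟩ ⟨k', hk', heq⟩
        simp only [Prod.mk.injEq] at heq
        obtain ⟨h1, h2⟩ := heq
        have hPp : (0:ℝ) < α * p.2 := mul_pos hα hp2
        have h1' : p'.1 + α * p.2 * k' = p.1 + α * p.2 * k := by rw [h2] at h1; exact h1
        have hb1 : p'.1 < α * p.2 := by rw [← h2]; exact hp'α
        have hkk : k = k' := by
          have h3 : ((k:ℝ) - k') * (α * p.2) = p'.1 - p.1 := by ring_nf; linarith
          have hlt1 : ((k:ℝ) - k') * (α * p.2) < 1 * (α * p.2) := by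
            rw [h3, one_mul]; linarith
          have hgt1 : (-1 : ℝ) * (α * p.2) < ((k:ℝ) - k') * (α * p.2) := by
            rw [h3]; nlinarith
          have hc1 : ((k:ℝ) - k') < 1 := lt_of_mul_lt_mul_right (by linarith) hPp.le
          have hc2 : (-1 : ℝ) < ((k:ℝ) - k') := lt_of_mul_lt_mul_right (by linarith) hPp.le
          have hi1 : ((k - k' : ℤ) : ℝ) < 1 := by push_cast; linarith
          have hi2 : (-1 : ℝ) < ((k - k' : ℤ) : ℝ) := by push_cast; linarith
          have hz1 : (k - k' : ℤ) < 1 := by exact_mod_cast hi1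
          have hz2 : (-1 : ℤ) < (k - k' : ℤ) := by exact_mod_cast hi2
          omega
        apply hne
        apply Prod.ext_iff.2
        refine ⟨?_, h2.symm⟩
        rw [hkk] at h1'
        linarith
      rw [Nat.card_coe_set_eq, hCeq, Set.ncard_image_of_injective _ hpstinj, hCun,
        aux_ncard_biUnion _ _ hGfin hGdisj]
      push_cast
      apply Finset.sum_congr rfl
      intro p hp
      have hpD := (Set.Finite.mem_toFinset hDfin).1 hp
      have hPp : (0:ℝ) < α * p.2 := mul_pos hα hpD.2.2.2.1
      have hGinj : Function.Injective (fun k : ℤ => (p.1 + α * p.2 * k, p.2)) := by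
        intro k k' hkk
        simp only [Prod.mk.injEq] at hkk
        have h := hkk.1
        have h' : α * p.2 * (k:ℝ) = α * p.2 * k' := by linarith
        have h'' : (k:ℝ) = k' := mul_left_cancel₀ hPp.ne' h'
        exact_mod_cast h''
      rw [show Gset α s t a b p = (fun k : ℤ => (p.1 + α * p.2 * k, p.2)) '' Kset α s t a b p
          from rfl,
        Set.ncard_image_of_injective _ hGinj]
      exact (hKboth t p hp).2
    -- integrability
    have hEmeas : ∀ p : ℝ × ℝ, MeasurableSet (Eset α s a b p) := by
      intro p
      have hm : Measurable fun τ : ℝ => Int.fract ((τ - (a - s * p.1) / p.2) / (α * s)) :=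
        measurable_fract.comp ((measurable_id.sub_const _).div_const _)
      exact hm measurableSet_Iio
    have hInt : ∀ p : ℝ × ℝ,
        IntervalIntegrable ((Eset α s a b p).indicator fun _ => (1:ℝ)) volume (1 - α * s) 1 := by
      intro p
      rw [intervalIntegrable_iff]
      exact ((integrableOn_const_iff (C := (1:ℝ))).2
        (Or.inr (by rw [Set.uIoc]; exact measure_Ioc_lt_top))).indicator (hEmeas p)
    -- height set is finite
    have hJeq : heightSet Λ ∩ Set.Ioo 0 (c * s) = Prod.snd '' Dset α Λ c s := by
      ext j
      constructor
      · rintro ⟨⟨hj0, x, hxΛ⟩, hj0', hjc⟩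
        obtain ⟨x', hx'Λ, hx'0, hx'α, -⟩ := reduce_point hα hshear hj0 hxΛ
        exact ⟨(x', j), ⟨hx'Λ, hx'0, hx'α, hj0, hjc⟩, rfl⟩
      · rintro ⟨p, ⟨hpΛ, -, -, hp2, hpc⟩, rfl⟩
        exact ⟨⟨hp2, p.1, hpΛ⟩, hp2, hpc⟩
    have hJfin : (heightSet Λ ∩ Set.Ioo 0 (c * s)).Finite := by
      rw [hJeq]; exact hDfin.image _
    have hmaps : ∀ p ∈ hDfin.toFinset, p.2 ∈ hJfin.toFinset := by
      intro p hp
      rw [Set.Finite.mem_toFinset] at hp ⊢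
      obtain ⟨hpΛ, -, -, hp2, hpc⟩ := hp
      exact ⟨⟨hp2, p.1, hpΛ⟩, hp2, hpc⟩
    have hfibercard : ∀ j ∈ hJfin.toFinset,
        (hDfin.toFinset.filter (fun p => p.2 = j)).card = phiCount α Λ j := by
      intro j hj
      rw [Set.Finite.mem_toFinset] at hj
      obtain ⟨⟨hj0, -⟩, -, hjc⟩ := hj
      have hinj2 : Function.Injective (fun x : ℝ => (x, j)) := by
        intro x x' h
        simpa using h
      have himg : ((hDfin.toFinset.filter (fun p => p.2 = j)) : Set (ℝ × ℝ))
          = (fun x : ℝ => (x, j)) '' {x : ℝ | (x, j) ∈ Λ ∧ 0 ≤ x ∧ x < α * j} := by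
        ext p
        simp only [Finset.coe_filter, Set.mem_setOf_eq, Set.Finite.mem_toFinset, Dset,
          Set.mem_image]
        constructor
        · rintro ⟨⟨hpΛ, hp0, hpα, hp2, hpc⟩, hpj⟩
          refine ⟨p.1, ⟨?_, hp0, ?_⟩, ?_⟩
          · rw [← hpj]; exact hpΛ
          · rw [← hpj]; exact hpα
          · exact Prod.ext_iff.2 ⟨rfl, hpj.symm⟩
        · rintro ⟨x, ⟨hxΛ, hx0, hxα⟩, rfl⟩
          exact ⟨⟨hxΛ, hx0, hxα, hj0, hjc⟩, rfl⟩
      rw [phiCount, Nat.card_coe_set_eq, ← Set.ncard_coe_finset, himg,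
        Set.ncard_image_of_injective _ hinj2]
    -- assemble
    calc (∫ t in (1 - α * s)..1,
            (Nat.card {q : ℝ × ℝ | q ∈ pst s t '' Λ ∧
              q.1 ∈ Set.Ico a b ∧ q.2 ∈ Set.Ioo 0 c} : ℝ))
        = ∫ t in (1 - α * s)..1,
            ∑ p ∈ hDfin.toFinset, (Eset α s a b p).indicator (fun _ => (1:ℝ)) t :=
          intervalIntegral.integral_congr (fun t _ => hcount t)
      _ = ∑ p ∈ hDfin.toFinset,
            ∫ t in (1 - α * s)..1, (Eset α s a b p).indicator (fun _ => (1:ℝ)) t :=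
          intervalIntegral.integral_finset_sum (fun p _ => hInt p)
      _ = ∑ p ∈ hDfin.toFinset, (b - a) / p.2 := by
          apply Finset.sum_congr rfl
          intro p hp
          have hpD := (Set.Finite.mem_toFinset hDfin).1 hp
          have hp2 : 0 < p.2 := hpD.2.2.2.1
          have hζp : ζ₁ ≤ p.2 := hζ₁J p.2 ⟨hp2, p.1, hpD.1⟩
          have hLpos : 0 < (b - a) / p.2 := div_pos (by linarith) hp2
          have hLle : (b - a) / p.2 ≤ α * s := by
            rw [div_le_iff₀ hp2]
            have h1 : ζ₁ * s₀ ≤ p.2 * s := mul_le_mul hζp hs1 hs₀.1.le hp2.le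
            have h2 : α * (ζ₁ * s₀) ≤ α * (p.2 * s) := mul_le_mul_of_nonneg_left h1 hα.le
            nlinarith
          exact integral_fract_indicator ((a - s * p.1) / p.2) ((b - a) / p.2) (α * s)
            hαs hLpos hLle
      _ = (b - a) * ∑ᶠ j ∈ heightSet Λ ∩ Set.Ioo 0 (c * s), (phiCount α Λ j : ℝ) / j := by
          rw [finsum_mem_eq_finite_toFinset_sum _ hJfin, Finset.mul_sum,
            ← Finset.sum_fiberwise_of_maps_to hmaps (fun p => (b - a) / p.2)]
          apply Finset.sum_congr rfl
          intro j hj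
          have hcard := hfibercard j hj
          have hcg : ∀ p ∈ hDfin.toFinset.filter (fun p => p.2 = j),
              (b - a) / p.2 = (b - a) / j := by
            intro p hp
            rw [(Finset.mem_filter.1 hp).2]
          rw [Finset.sum_congr rfl hcg, Finset.sum_const, hcard, nsmul_eq_mul]
          ring
  calc (∫ s in s₀..1, ∫ t in (1 - α * s)..1,
        (Nat.card {q : ℝ × ℝ | q ∈ pst s t '' Λ ∧
          q.1 ∈ Set.Ico a b ∧ q.2 ∈ Set.Ioo 0 c} : ℝ))
      = ∫ s in s₀..1, (b - a) *
          ∑ᶠ j ∈ heightSet Λ ∩ Set.Ioo 0 (c * s), (phiCount α Λ j : ℝ) / j :=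
        intervalIntegral.integral_congr key
    _ = (b - a) * ∫ s in s₀..1,
          (∑ᶠ j ∈ heightSet Λ ∩ Set.Ioo 0 (c * s), (phiCount α Λ j : ℝ) / j) :=
        intervalIntegral.integral_const_mul _ _
end

section
/- Fix α > 0 and let Λ ⊆ ℝ² be α-shear-invariant and locally finite, and suppose there is c_ω > 0 such that R^{−2} · #(Λ ∩ T_R) → c_ω as R → ∞, where T_R = {(x,y) : 0 < y < R, 0 ≤ x < αy}. Fix s₀ ∈ (0,1). Then there exists c₁ > 0 such that for every β > 0 and every strictly increasing sequence (a_n) in (0,1) with a_n → 1, setting c_n = β/(1 − a_n) and B_n = (a_n, 1] × (0, c_ω·c_n), one has ∫_{Ω⁰} #( p_{s,t}(Λ) ∩ B_n ) dm(s,t) ≥ c₁·β for all sufficiently large n. -/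
open MeasureTheory Filter

/-- The region `Ω⁰ = {(s,t) : s₀ ≤ s ≤ 1, 1 - αs < t ≤ 1}`. -/
def Omega0 (α s₀ : ℝ) : Set (ℝ × ℝ) :=
  {p : ℝ × ℝ | s₀ ≤ p.1 ∧ p.1 ≤ 1 ∧ 1 - α * p.1 < p.2 ∧ p.2 ≤ 1}

lemma slice_lemma (P ℓ u : ℝ) (hℓ : 0 < ℓ) (hℓP : ℓ ≤ P) :
    ENNReal.ofReal ℓ ≤ volume (Set.Ioc (1-P) 1 ∩ ⋃ k : ℤ, Set.Ioc (u - ℓ - k*P) (u - k*P)) := by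
  have hP : 0 < P := lt_of_lt_of_le hℓ hℓP
  set k₀ : ℤ := ⌈(u-1)/P⌉ with hk₀
  set r : ℝ := u - k₀*P with hr
  have hr1 : r ≤ 1 := by
    have := Int.le_ceil ((u-1)/P)
    rw [div_le_iff₀ hP] at this
    simp only [hr]; linarith
  have hr2 : 1 - P < r := by
    have h2 : ((k₀:ℝ) - 1) * P < u - 1 := by
      rw [← lt_div_iff₀ hP]
      have := Int.ceil_lt_add_one ((u-1)/P)
      push_cast; linarith
    simp only [hr]; nlinarith
  set A : Set ℝ := Set.Ioc (max (1-P) (r-ℓ)) r with hA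
  set B : Set ℝ := Set.Ioc (r+P-ℓ) 1 with hB
  have hAsub : A ⊆ Set.Ioc (1-P) 1 ∩ ⋃ k : ℤ, Set.Ioc (u - ℓ - k*P) (u - k*P) := by
    rintro t ⟨h1, h2⟩
    refine ⟨⟨lt_of_le_of_lt (le_max_left _ _) h1, le_trans h2 hr1⟩, ?_⟩
    refine Set.mem_iUnion.2 ⟨k₀, ?_, ?_⟩
    · have he : u - ℓ - (k₀:ℝ)*P = r - ℓ := by rw [hr]; ring
      rw [he]; exact lt_of_le_of_lt (le_max_right _ _) h1
    · rw [← hr]; exact h2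
  have hBsub : B ⊆ Set.Ioc (1-P) 1 ∩ ⋃ k : ℤ, Set.Ioc (u - ℓ - k*P) (u - k*P) := by
    rintro t ⟨h1, h2⟩
    refine ⟨⟨by linarith, h2⟩, ?_⟩
    refine Set.mem_iUnion.2 ⟨k₀ - 1, ?_, ?_⟩
    · have he : u - ℓ - ((k₀:ℤ):ℝ)*P + P = r + P - ℓ := by rw [hr]; ring
      push_cast
      nlinarith [h1]
    · push_cast
      have : u - ((k₀:ℝ) - 1) * P = r + P := by rw [hr]; ring
      rw [this]; linarith
  have hdisj : Disjoint A B := by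
    rw [Set.disjoint_left]
    rintro t ⟨h1, h2⟩ ⟨h3, h4⟩
    linarith
  have hvol : ENNReal.ofReal ℓ ≤ volume (A ∪ B) := by
    rw [measure_union hdisj measurableSet_Ioc, Real.volume_Ioc, Real.volume_Ioc]
    rcases le_total ℓ (r - (1-P)) with h | h
    · have hm : max (1-P) (r-ℓ) = r - ℓ := max_eq_right (by linarith)
      rw [hm]
      have : r - (r - ℓ) = ℓ := by ring
      rw [this]
      exact le_self_add
    · have hm : max (1-P) (r-ℓ) = 1-P := max_eq_left (by linarith)
      rw [hm, ← ENNReal.ofReal_add (by linarith) (by linarith)]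
      apply ENNReal.ofReal_le_ofReal; linarith
  exact le_trans hvol (measure_mono (Set.union_subset hAsub hBsub))

/-- The region in the (s,t)-plane where the `k`-shifted orbit point of `(x,y)`
lands in the box. -/
def Vset (α s₀ x y a : ℝ) : Set (ℝ × ℝ) :=
  ⋃ k : ℤ, {p : ℝ × ℝ | s₀ < p.1 ∧ p.1 < 1 ∧ 1 - α * p.1 < p.2 ∧ p.2 ≤ 1 ∧
    (1 - p.1*x)/y - (1-a)/y - k*(α*p.1) < p.2 ∧ p.2 ≤ (1 - p.1*x)/y - k*(α*p.1)}

lemma Vset_meas (α s₀ x y a : ℝ) : MeasurableSet (Vset α s₀ x y a) := by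
  apply MeasurableSet.iUnion
  intro k
  apply MeasurableSet.inter (measurableSet_lt measurable_const measurable_fst)
  apply MeasurableSet.inter (measurableSet_lt measurable_fst measurable_const)
  apply MeasurableSet.inter
  · exact measurableSet_lt (by fun_prop) measurable_snd
  apply MeasurableSet.inter (measurableSet_le measurable_snd measurable_const)
  apply MeasurableSet.inter
  · exact measurableSet_lt (by fun_prop) measurable_snd
  · exact measurableSet_le measurable_snd (by fun_prop)

lemma Vset_vol (α s₀ x y a : ℝ) (hα : 0 < α) (hs₀ : 0 < s₀) (hs₁ : s₀ < 1)
    (hy : 0 < y) (ha : a < 1) (hsmall : (1-a)/y ≤ α * s₀) :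
    ENNReal.ofReal ((1-a)/y * (1 - s₀)) ≤ volume (Vset α s₀ x y a) := by
  have hmeas := Vset_meas α s₀ x y a
  rw [show (volume : Measure (ℝ × ℝ)) = (volume : Measure ℝ).prod volume from Measure.volume_eq_prod ℝ ℝ]
  rw [Measure.prod_apply hmeas]
  have key : ∀ s ∈ Set.Ioo s₀ 1,
      ENNReal.ofReal ((1-a)/y) ≤ volume (Prod.mk s ⁻¹' Vset α s₀ x y a) := by
    intro s hs
    have hsp : Prod.mk s ⁻¹' Vset α s₀ x y a =
        Set.Ioc (1 - α*s) 1 ∩ ⋃ k : ℤ, Set.Ioc ((1 - s*x)/y - (1-a)/y - k*(α*s)) ((1 - s*x)/y - k*(α*s)) := by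
      ext t
      simp only [Vset, Set.mem_preimage, Set.mem_iUnion, Set.mem_setOf_eq, Set.mem_inter_iff,
        Set.mem_Ioc]
      constructor
      · rintro ⟨k, _, _, h3, h4, h5, h6⟩; exact ⟨⟨h3, h4⟩, k, h5, h6⟩
      · rintro ⟨⟨h3, h4⟩, k, h5, h6⟩; exact ⟨k, hs.1, hs.2, h3, h4, h5, h6⟩
    rw [hsp]
    exact slice_lemma (α*s) ((1-a)/y) ((1-s*x)/y)
      (div_pos (by linarith) hy)
      (le_trans hsmall (by nlinarith [hs.1]))
  calc ENNReal.ofReal ((1-a)/y * (1 - s₀))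
      = ENNReal.ofReal ((1-a)/y) * volume (Set.Ioo s₀ 1) := by
        rw [Real.volume_Ioo, ← ENNReal.ofReal_mul (le_of_lt (div_pos (by linarith) hy))]
    _ = ∫⁻ s in Set.Ioo s₀ 1, ENNReal.ofReal ((1-a)/y) := by
        rw [setLIntegral_const, mul_comm]
    _ ≤ ∫⁻ s in Set.Ioo s₀ 1, volume (Prod.mk s ⁻¹' Vset α s₀ x y a) := by
        apply setLIntegral_mono (measurable_measure_prodMk_left hmeas) key
    _ ≤ ∫⁻ s, volume (Prod.mk s ⁻¹' Vset α s₀ x y a) := setLIntegral_le_lintegral _ _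

lemma Vset_sub (α s₀ x y a : ℝ) : Vset α s₀ x y a ⊆ Omega0 α s₀ := by
  intro p hp
  obtain ⟨k, h1, h2, h3, h4, _, _⟩ := Set.mem_iUnion.1 hp
  exact ⟨le_of_lt h1, le_of_lt h2, h3, h4⟩

lemma shear_orbit {α : ℝ} {Λ : Set (ℝ × ℝ)} (hshear : shear α '' Λ = Λ)
    {x y : ℝ} (h : (x, y) ∈ Λ) (k : ℤ) : (x + k * (α * y), y) ∈ Λ := by
  induction k using Int.induction_on with
  | zero => simpa using h
  | succ k ih =>
    have h2 := Set.mem_image_of_mem (shear α) ih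
    rw [hshear] at h2
    simp only [shear] at h2
    push_cast
    convert h2 using 2
    push_cast
    ring
  | pred k ih =>
    rw [← hshear] at ih
    obtain ⟨q, hq, he⟩ := ih
    have hq2 : q.2 = y := congrArg Prod.snd he
    have hq1 : q.1 + α * q.2 = x + (-k : ℤ) * (α * y) := congrArg Prod.fst he
    have : q = (x + (-k - 1 : ℤ) * (α * y), y) := by
      apply Prod.ext
      · push_cast at hq1 ⊢; rw [hq2] at hq1; linarith
      · exact hq2
    rwa [this] at hq

lemma pst_inj {s : ℝ} (hs : s ≠ 0) (t : ℝ) : Function.Injective (pst s t) := by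
  intro p q h
  simp only [pst, Prod.mk.injEq] at h
  have h2 : p.2 = q.2 := by
    have := h.2
    field_simp at this
    exact this
  have h1 : p.1 = q.1 := by
    have := h.1
    rw [h2] at this
    have : s * p.1 = s * q.1 := by linarith
    exact mul_left_cancel₀ hs this
  exact Prod.ext h1 h2

lemma Omega0_meas (α s₀ : ℝ) : MeasurableSet (Omega0 α s₀) := by
  apply MeasurableSet.inter (measurableSet_le measurable_const measurable_fst)
  apply MeasurableSet.inter (measurableSet_le measurable_fst measurable_const)
  exact MeasurableSet.inter (measurableSet_lt (by fun_prop) measurable_snd)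
    (measurableSet_le measurable_snd measurable_const)

lemma Omega0_fin (α s₀ : ℝ) (hα : 0 < α) : volume (Omega0 α s₀) < ⊤ := by
  have hsub : Omega0 α s₀ ⊆ Set.Icc (s₀, 1 - α) (1, 1) := by
    rintro p ⟨h1, h2, h3, h4⟩
    have : α * p.1 ≤ α := by nlinarith
    rw [Set.mem_Icc, Prod.le_def, Prod.le_def]
    exact ⟨⟨h1, by simp; linarith⟩, ⟨h2, h4⟩⟩
  exact lt_of_le_of_lt (measure_mono hsub) (isCompact_Icc.measure_lt_top)

set_option maxHeartbeats 4000000 in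
/-- Lower bound on the expected number of points of `p_{s,t}(Λ)` in the thin
boxes `B_n = (a_n, 1] × (0, c_ω c_n)` with `c_n = β/(1 - a_n)`, with respect to
the normalized Lebesgue measure `dm = (2/α) ds dt` on `Ω⁰`. -/
theorem lower_bound_thin_boxes
    (α : ℝ) (hα : 0 < α) (Λ : Set (ℝ × ℝ))
    (hshear : shear α '' Λ = Λ)
    (hloc : ∀ K : Set (ℝ × ℝ), IsCompact K → (Λ ∩ K).Finite)
    (cω : ℝ) (hcω : 0 < cω)
    (hlim : Tendsto (fun R : ℝ =>
        (Nat.card {p : ℝ × ℝ | p ∈ Λ ∧ 0 < p.2 ∧ p.2 < R ∧ 0 ≤ p.1 ∧ p.1 < α * p.2} : ℝ)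
          / R ^ 2) atTop (nhds cω))
    (s₀ : ℝ) (hs₀ : s₀ ∈ Set.Ioo (0 : ℝ) 1) :
    ∃ c₁ : ℝ, 0 < c₁ ∧ ∀ β : ℝ, 0 < β →
      ∀ a : ℕ → ℝ, StrictMono a → (∀ n, a n ∈ Set.Ioo (0 : ℝ) 1) →
        Tendsto a atTop (nhds 1) →
        ∃ N : ℕ, ∀ n ≥ N,
          c₁ * β ≤ (2 / α) * ∫ p in Omega0 α s₀,
            (Nat.card {q : ℝ × ℝ | q ∈ pst p.1 p.2 '' Λ ∧
              q.1 ∈ Set.Ioc (a n) 1 ∧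
              q.2 ∈ Set.Ioo 0 (cω * (β / (1 - a n)))} : ℝ) := by
  classical
  obtain ⟨hs₀0, hs₀1⟩ := hs₀
  refine ⟨s₀ * (1 - s₀) * cω^2 / (2*α), div_pos (by nlinarith [mul_pos (mul_pos hs₀0 (by linarith : (0:ℝ) < 1 - s₀)) (pow_pos hcω 2)]) (by positivity), ?_⟩
  intro β hβ a hmono hmem hten
  -- threshold from the counting hypothesis
  rw [Metric.tendsto_atTop] at hlim
  obtain ⟨R₀, hR₀⟩ := hlim (cω/8) (by positivity)
  set R₁ : ℝ := max R₀ 1 with hR₁def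
  have hR₁pos : (0:ℝ) < R₁ := lt_of_lt_of_le one_pos (le_max_right _ _)
  set δ : ℝ := min (s₀*cω*β/(2*R₁)) (α*s₀^2*cω*β/2) with hδdef
  have hδpos : 0 < δ := lt_min (by positivity) (by positivity)
  have hev : ∀ᶠ n in atTop, 1 - δ < a n := hten.eventually (eventually_gt_nhds (by linarith))
  obtain ⟨N, hN⟩ := eventually_atTop.1 hev
  refine ⟨N, fun n hn => ?_⟩
  have han := hmem n
  set ε1 : ℝ := 1 - a n with hε1
  have hε1pos : 0 < ε1 := by simp only [hε1]; linarith [han.2]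
  have hε1lt1 : ε1 < 1 := by simp only [hε1]; linarith [han.1]
  have hε1δ : ε1 < δ := by have := hN n hn; simp only [hε1]; linarith
  set C : ℝ := cω * (β / ε1) with hC
  have hCpos : 0 < C := by positivity
  set R : ℝ := s₀ * C with hRdef
  have hRpos : 0 < R := by positivity
  have hRε1 : R * ε1 = s₀ * cω * β := by
    rw [hRdef, hC]; field_simp
  have hR12 : R₁ ≤ R / 2 := by
    have h1 : ε1 < s₀*cω*β/(2*R₁) := lt_of_lt_of_le hε1δ (min_le_left _ _)
    rw [lt_div_iff₀ (by positivity)] at h1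
    rw [le_div_iff₀ (by norm_num : (0:ℝ) < 2)]
    nlinarith [hRε1]
  have hsmall : ∀ y : ℝ, R/2 ≤ y → ε1/y ≤ α * s₀ := by
    intro y hy
    have hypos : 0 < y := lt_of_lt_of_le (by linarith) hy
    have h2 : ε1 ≤ α*s₀^2*cω*β/2 := le_of_lt (lt_of_lt_of_le hε1δ (min_le_right _ _))
    rw [div_le_iff₀ hypos]
    have h3 : ε1 * ε1 ≤ α*s₀^2*cω*β/2 := by nlinarith
    have h4 : α*s₀*(R/2) ≤ α*s₀*y := by nlinarith [mul_pos hα hs₀0]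
    have h5 : α*s₀*R*ε1/2 = α*s₀^2*cω*β/2 := by linear_combination (α*s₀/2) * hRε1
    nlinarith [h3, h4, h5, hε1pos]
  clear_value R₁ δ ε1 C R
  -- finiteness of the triangle counts
  have hTfin : ∀ R' : ℝ,
      Set.Finite {p : ℝ×ℝ | p ∈ Λ ∧ 0 < p.2 ∧ p.2 < R' ∧ 0 ≤ p.1 ∧ p.1 < α*p.2} := by
    intro R'
    apply (hloc (Set.Icc ((0:ℝ),(0:ℝ)) (α * max R' 0, max R' 0)) isCompact_Icc).subset
    rintro p ⟨hΛp, h0, hR', hx0, hxa⟩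
    have hy : p.2 ≤ max R' 0 := le_trans (le_of_lt hR') (le_max_left _ _)
    refine ⟨hΛp, ?_⟩
    rw [Set.mem_Icc, Prod.le_def, Prod.le_def]
    exact ⟨⟨hx0, le_of_lt h0⟩, ⟨by show p.1 ≤ α * max R' 0; nlinarith [hy, hα, hxa], hy⟩⟩
  -- the shell
  have hShfin : Set.Finite {p : ℝ×ℝ | p ∈ Λ ∧ R/2 ≤ p.2 ∧ p.2 < R ∧ 0 ≤ p.1 ∧ p.1 < α*p.2} := by
    apply (hTfin R).subset
    rintro p ⟨hΛp, h1, h2, h3, h4⟩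
    exact ⟨hΛp, lt_of_lt_of_le (by linarith) h1, h2, h3, h4⟩
  set J : Finset (ℝ×ℝ) := hShfin.toFinset with hJdef
  have hJmem : ∀ l ∈ J, l ∈ Λ ∧ R/2 ≤ l.2 ∧ l.2 < R ∧ 0 ≤ l.1 ∧ l.1 < α*l.2 := by
    intro l hl; rwa [hJdef, Set.Finite.mem_toFinset] at hl
  -- split the triangle count
  have hsplit : {p : ℝ×ℝ | p ∈ Λ ∧ 0 < p.2 ∧ p.2 < R ∧ 0 ≤ p.1 ∧ p.1 < α*p.2} =
      {p : ℝ×ℝ | p ∈ Λ ∧ 0 < p.2 ∧ p.2 < R/2 ∧ 0 ≤ p.1 ∧ p.1 < α*p.2} ∪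
      {p : ℝ×ℝ | p ∈ Λ ∧ R/2 ≤ p.2 ∧ p.2 < R ∧ 0 ≤ p.1 ∧ p.1 < α*p.2} := by
    ext p
    simp only [Set.mem_setOf_eq, Set.mem_union]
    constructor
    · rintro ⟨hΛp, h1, h2, h3, h4⟩
      rcases lt_or_ge p.2 (R/2) with h | h
      · exact Or.inl ⟨hΛp, h1, h, h3, h4⟩
      · exact Or.inr ⟨hΛp, h, h2, h3, h4⟩
    · rintro (⟨hΛp, h1, h2, h3, h4⟩ | ⟨hΛp, h1, h2, h3, h4⟩)
      · exact ⟨hΛp, h1, by linarith, h3, h4⟩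
      · exact ⟨hΛp, by linarith, h2, h3, h4⟩
  have hdisj2 : Disjoint
      {p : ℝ×ℝ | p ∈ Λ ∧ 0 < p.2 ∧ p.2 < R/2 ∧ 0 ≤ p.1 ∧ p.1 < α*p.2}
      {p : ℝ×ℝ | p ∈ Λ ∧ R/2 ≤ p.2 ∧ p.2 < R ∧ 0 ≤ p.1 ∧ p.1 < α*p.2} := by
    rw [Set.disjoint_left]
    rintro p ⟨_, _, h2, _, _⟩ ⟨_, h1', _, _, _⟩
    linarith
  have hcardsplit :
      (Nat.card {p : ℝ×ℝ | p ∈ Λ ∧ 0 < p.2 ∧ p.2 < R ∧ 0 ≤ p.1 ∧ p.1 < α*p.2} : ℝ) =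
      (Nat.card {p : ℝ×ℝ | p ∈ Λ ∧ 0 < p.2 ∧ p.2 < R/2 ∧ 0 ≤ p.1 ∧ p.1 < α*p.2} : ℝ)
        + (J.card : ℝ) := by
    rw [Nat.card_coe_set_eq, Nat.card_coe_set_eq, hsplit,
      Set.ncard_union_eq hdisj2 (hTfin (R/2)) hShfin,
      Set.ncard_eq_toFinset_card _ hShfin]
    push_cast
    rfl
  clear_value J
  -- lower bound on the shell count
  have hJcard : cω * R^2 / 2 ≤ (J.card : ℝ) := by
    have hR₀R₁ : R₀ ≤ R₁ := by rw [hR₁def]; exact le_max_left _ _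
    have hRR₀ : R ≥ R₀ := le_trans hR₀R₁ (le_trans hR12 (by linarith))
    have hR2R₀ : R/2 ≥ R₀ := le_trans hR₀R₁ hR12
    have hb1 := hR₀ R hRR₀
    have hb2 := hR₀ (R/2) hR2R₀
    rw [Real.dist_eq, abs_lt] at hb1 hb2
    have hRsq : (0:ℝ) < R^2 := by positivity
    have hR2sq : (0:ℝ) < (R/2)^2 := by positivity
    have hc1 : (cω - cω/8) * R^2 < (Nat.card {p : ℝ×ℝ | p ∈ Λ ∧ 0 < p.2 ∧ p.2 < R ∧ 0 ≤ p.1 ∧ p.1 < α*p.2} : ℝ) := by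
      have h' : cω - cω/8 < (Nat.card {p : ℝ×ℝ | p ∈ Λ ∧ 0 < p.2 ∧ p.2 < R ∧ 0 ≤ p.1 ∧ p.1 < α*p.2} : ℝ) / R^2 := by
        linarith [hb1.1]
      rw [lt_div_iff₀ hRsq] at h'
      linarith
    have hc2 : (Nat.card {p : ℝ×ℝ | p ∈ Λ ∧ 0 < p.2 ∧ p.2 < R/2 ∧ 0 ≤ p.1 ∧ p.1 < α*p.2} : ℝ) < (cω + cω/8) * (R/2)^2 := by
      have h' : (Nat.card {p : ℝ×ℝ | p ∈ Λ ∧ 0 < p.2 ∧ p.2 < R/2 ∧ 0 ≤ p.1 ∧ p.1 < α*p.2} : ℝ) / (R/2)^2 < cω + cω/8 := by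
        linarith [hb2.2]
      rw [div_lt_iff₀ hR2sq] at h'
      linarith
    nlinarith [hcardsplit]
  -- the compact window containing all relevant lattice points
  set M : ℝ := (2+(1+α)*C)/s₀ with hMdef
  have hMpos : 0 < M := by positivity
  set K : Set (ℝ×ℝ) := Set.Icc (-M, 0) (M, C) with hKdef
  have hFfin : (Λ ∩ K).Finite := hloc K isCompact_Icc
  set Fn : Finset (ℝ×ℝ) := hFfin.toFinset with hFndef
  have hKmem : ∀ p ∈ Omega0 α s₀, ∀ l : ℝ×ℝ,
      (pst p.1 p.2 l).1 ∈ Set.Ioc (a n) 1 → (pst p.1 p.2 l).2 ∈ Set.Ioo 0 C → l ∈ K := by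
    intro p hp l h1 h2
    obtain ⟨hps, hp1, hpt, hpt1⟩ := hp
    have hppos : 0 < p.1 := lt_of_lt_of_le hs₀0 hps
    simp only [pst, Set.mem_Ioc, Set.mem_Ioo] at h1 h2
    have hy0 : 0 < l.2 := by
      have := mul_pos h2.1 hppos
      rwa [div_mul_cancel₀ _ (ne_of_gt hppos)] at this
    have hyC : l.2 ≤ C := by
      have hle : l.2 ≤ l.2/p.1 := by
        rw [le_div_iff₀ hppos]; nlinarith
      linarith [h2.2]
    have hptlow : 1 - α ≤ p.2 := by nlinarith
    have htyub : p.2 * l.2 ≤ C := by nlinarith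
    have htylb : -(1+α)*C ≤ p.2 * l.2 := by nlinarith
    have hxub : p.1 * l.1 ≤ M * s₀ := by
      rw [hMdef, div_mul_cancel₀ _ (ne_of_gt hs₀0)]
      nlinarith [h1.2]
    have hxlb : -(M * s₀) ≤ p.1 * l.1 := by
      rw [hMdef, div_mul_cancel₀ _ (ne_of_gt hs₀0)]
      nlinarith [h1.1, han.1, han.2]
    rw [hKdef, Set.mem_Icc, Prod.le_def, Prod.le_def]
    refine ⟨⟨?_, le_of_lt hy0⟩, ⟨?_, hyC⟩⟩
    · show -M ≤ l.1
      nlinarith [mul_le_mul_of_nonneg_right hps hMpos.le]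
    · show l.1 ≤ M
      nlinarith [mul_le_mul_of_nonneg_right hps hMpos.le]
  clear_value K Fn
  clear_value M
  -- identification of the integrand on Ω⁰
  set g : ℝ×ℝ → ℝ := fun p => ((Fn.filter (fun l => (pst p.1 p.2 l).1 ∈ Set.Ioc (a n) 1 ∧
      (pst p.1 p.2 l).2 ∈ Set.Ioo 0 C)).card : ℝ) with hgdef
  clear_value g
  have hcount : Set.EqOn (fun p : ℝ×ℝ =>
      (Nat.card {q : ℝ×ℝ | q ∈ pst p.1 p.2 '' Λ ∧ q.1 ∈ Set.Ioc (a n) 1 ∧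
        q.2 ∈ Set.Ioo 0 C} : ℝ)) g (Omega0 α s₀) := by
    intro p hp
    have hppos : 0 < p.1 := lt_of_lt_of_le hs₀0 hp.1
    have hsetq : {q : ℝ×ℝ | q ∈ pst p.1 p.2 '' Λ ∧ q.1 ∈ Set.Ioc (a n) 1 ∧
        q.2 ∈ Set.Ioo 0 C} = pst p.1 p.2 '' {l : ℝ×ℝ | l ∈ Λ ∧
          (pst p.1 p.2 l).1 ∈ Set.Ioc (a n) 1 ∧ (pst p.1 p.2 l).2 ∈ Set.Ioo 0 C} := by
      ext q
      constructor
      · rintro ⟨⟨l, hl, rfl⟩, hq1, hq2⟩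
        exact ⟨l, ⟨hl, hq1, hq2⟩, rfl⟩
      · rintro ⟨l, ⟨hl, hq1, hq2⟩, rfl⟩
        exact ⟨⟨l, hl, rfl⟩, hq1, hq2⟩
    have hsetl : {l : ℝ×ℝ | l ∈ Λ ∧ (pst p.1 p.2 l).1 ∈ Set.Ioc (a n) 1 ∧
        (pst p.1 p.2 l).2 ∈ Set.Ioo 0 C} =
        ↑(Fn.filter (fun l => (pst p.1 p.2 l).1 ∈ Set.Ioc (a n) 1 ∧
          (pst p.1 p.2 l).2 ∈ Set.Ioo 0 C)) := by
      ext l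
      simp only [Finset.coe_filter, Set.mem_setOf_eq, hFndef, Set.Finite.mem_toFinset]
      constructor
      · rintro ⟨hl, hq1, hq2⟩
        exact ⟨⟨hl, hKmem p hp l hq1 hq2⟩, hq1, hq2⟩
      · rintro ⟨⟨hl, _⟩, hq1, hq2⟩
        exact ⟨hl, hq1, hq2⟩
    simp only [hgdef]
    rw [Nat.card_coe_set_eq, hsetq,
      Set.ncard_image_of_injective _ (pst_inj (ne_of_gt hppos) p.2), hsetl,
      Set.ncard_coe_finset]
  have hΩmeas := Omega0_meas α s₀
  have hΩfin := Omega0_fin α s₀ hα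
  have hIeq : (∫ p in Omega0 α s₀,
      (Nat.card {q : ℝ×ℝ | q ∈ pst p.1 p.2 '' Λ ∧ q.1 ∈ Set.Ioc (a n) 1 ∧
        q.2 ∈ Set.Ioo 0 C} : ℝ)) = ∫ p in Omega0 α s₀, g p :=
    setIntegral_congr_fun hΩmeas hcount
  rw [hIeq]
  set gJ : ℝ×ℝ → ℝ := fun p =>
    ∑ l ∈ J, Set.indicator (Vset α s₀ l.1 l.2 (a n)) (fun _ => (1:ℝ)) p with hgJdef
  clear_value gJ
  have hgJint : IntegrableOn gJ (Omega0 α s₀) := by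
    rw [hgJdef]
    apply integrable_finset_sum
    intro l _
    exact (integrableOn_const hΩfin.ne).indicator (Vset_meas α s₀ l.1 l.2 (a n))
  have hgint : IntegrableOn g (Omega0 α s₀) := by
    have hgrep : g = fun p => ∑ l ∈ Fn, Set.indicator
        {p' : ℝ×ℝ | (pst p'.1 p'.2 l).1 ∈ Set.Ioc (a n) 1 ∧
          (pst p'.1 p'.2 l).2 ∈ Set.Ioo 0 C} (fun _ => (1:ℝ)) p := by
      funext p
      simp only [hgdef]
      rw [Finset.card_filter]
      push_cast
      refine Finset.sum_congr rfl (fun l _ => ?_)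
      simp [Set.indicator_apply]
    rw [hgrep]
    apply integrable_finset_sum
    intro l _
    refine (integrableOn_const hΩfin.ne).indicator ?_
    have hpre : {p' : ℝ×ℝ | (pst p'.1 p'.2 l).1 ∈ Set.Ioc (a n) 1 ∧
        (pst p'.1 p'.2 l).2 ∈ Set.Ioo 0 C} =
        (fun p' : ℝ×ℝ => (p'.1 * l.1 + p'.2 * l.2, l.2/p'.1)) ⁻¹'
          ((Set.Ioc (a n) 1) ×ˢ (Set.Ioo 0 C)) := by
      ext p'
      simp [pst, Set.mem_prod]
    rw [hpre]
    exact (measurableSet_Ioc.prod measurableSet_Ioo).preimage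
      ((by fun_prop : Measurable fun p' : ℝ×ℝ => p'.1 * l.1 + p'.2 * l.2).prodMk
        (measurable_const.div measurable_fst))
  -- pointwise comparison on Ω⁰
  have hptle : ∀ p ∈ Omega0 α s₀, gJ p ≤ g p := by
    intro p hp
    have hppos : 0 < p.1 := lt_of_lt_of_le hs₀0 hp.1
    have hgJcard : gJ p = ((J.filter (fun l => p ∈ Vset α s₀ l.1 l.2 (a n))).card : ℝ) := by
      simp only [hgJdef]
      rw [Finset.card_filter]
      push_cast
      refine Finset.sum_congr rfl (fun l _ => ?_)
      simp [Set.indicator_apply]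
    rw [hgJcard]
    simp only [hgdef]
    rw [Nat.cast_le]
    have hch : ∀ l : ℝ×ℝ, ∃ k : ℤ, p ∈ Vset α s₀ l.1 l.2 (a n) →
        (s₀ < p.1 ∧ p.1 < 1 ∧ 1 - α*p.1 < p.2 ∧ p.2 ≤ 1 ∧
         (1 - p.1*l.1)/l.2 - (1-(a n))/l.2 - k*(α*p.1) < p.2 ∧
         p.2 ≤ (1 - p.1*l.1)/l.2 - k*(α*p.1)) := by
      intro l
      by_cases hl : p ∈ Vset α s₀ l.1 l.2 (a n)
      · obtain ⟨k, hk⟩ := Set.mem_iUnion.1 hl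
        exact ⟨k, fun _ => hk⟩
      · exact ⟨0, fun h => absurd h hl⟩
    choose kf hkf using hch
    apply Finset.card_le_card_of_injOn (fun l => (l.1 + kf l * (α * l.2), l.2))
    · intro l hl
      rw [Finset.mem_coe, Finset.mem_filter] at hl
      obtain ⟨hlJ, hlV⟩ := hl
      obtain ⟨hlΛ, hy1, hy2, hx1, hx2⟩ := hJmem l hlJ
      have hy0 : 0 < l.2 := lt_of_lt_of_le (by linarith) hy1
      obtain ⟨_, _, _, hpt1, h5, h6⟩ := hkf l hlV
      have e1 : (1 - p.1*l.1)/l.2 * l.2 = 1 - p.1*l.1 := div_mul_cancel₀ _ (ne_of_gt hy0)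
      have e2 : (1-(a n))/l.2 * l.2 = 1 - a n := div_mul_cancel₀ _ (ne_of_gt hy0)
      have h5' := mul_lt_mul_of_pos_right h5 hy0
      have h6' := mul_le_mul_of_nonneg_right h6 (le_of_lt hy0)
      have hq1 : (pst p.1 p.2 (l.1 + kf l * (α * l.2), l.2)).1 ∈ Set.Ioc (a n) 1 := by
        simp only [pst, Set.mem_Ioc]
        constructor
        · nlinarith [h5', e1, e2]
        · nlinarith [h6', e1]
      have hq2 : (pst p.1 p.2 (l.1 + kf l * (α * l.2), l.2)).2 ∈ Set.Ioo 0 C := by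
        simp only [pst, Set.mem_Ioo]
        refine ⟨div_pos hy0 hppos, ?_⟩
        rw [div_lt_iff₀ hppos]
        nlinarith [hp.1, hCpos]
      rw [Finset.mem_coe, Finset.mem_filter]
      refine ⟨?_, hq1, hq2⟩
      rw [hFndef, Set.Finite.mem_toFinset]
      refine ⟨?_, hKmem p hp _ hq1 hq2⟩
      have hlΛ' : (l.1, l.2) ∈ Λ := by rwa [Prod.mk.eta]
      exact shear_orbit hshear hlΛ' (kf l)
    · intro l1 h1 l2 h2 heq
      rw [Finset.mem_coe, Finset.mem_filter] at h1 h2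
      obtain ⟨h1J, -⟩ := h1
      obtain ⟨h2J, -⟩ := h2
      obtain ⟨-, hy11, -, hx11, hx12⟩ := hJmem l1 h1J
      obtain ⟨-, hy21, -, hx21, hx22⟩ := hJmem l2 h2J
      injection heq with hxx0 hyy
      have hy0 : 0 < l1.2 := lt_of_lt_of_le (by linarith) hy11
      have hxx := hxx0
      rw [← hyy] at hxx hx22
      have hkeq : kf l1 = kf l2 := by
        by_contra hne
        rcases lt_or_gt_of_ne hne with h | h
        · have : (kf l1 : ℝ) + 1 ≤ kf l2 := by exact_mod_cast h
          nlinarith [mul_pos hα hy0]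
        · have : (kf l2 : ℝ) + 1 ≤ kf l1 := by exact_mod_cast h
          nlinarith [mul_pos hα hy0]
      rw [hkeq] at hxx
      have : l1.1 = l2.1 := by linarith
      exact Prod.ext this hyy
  -- computing the lower integral
  have hIJ : ∫ p in Omega0 α s₀, gJ p
      = ∑ l ∈ J, (volume (Vset α s₀ l.1 l.2 (a n))).toReal := by
    simp only [hgJdef]
    rw [integral_finset_sum _ (fun (l : ℝ×ℝ) _ =>
      (integrableOn_const (C := (1:ℝ)) hΩfin.ne).indicator (Vset_meas α s₀ l.1 l.2 (a n)))]
    refine Finset.sum_congr rfl (fun l hl => ?_)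
    rw [setIntegral_indicator (Vset_meas α s₀ l.1 l.2 (a n)),
      Set.inter_eq_self_of_subset_right (Vset_sub α s₀ l.1 l.2 (a n)),
      setIntegral_const, smul_eq_mul, mul_one]
    rfl
  have hVlb : ∀ l ∈ J, ε1/R*(1-s₀) ≤ (volume (Vset α s₀ l.1 l.2 (a n))).toReal := by
    intro l hl
    obtain ⟨-, hy1, hy2, -, -⟩ := hJmem l hl
    have hy0 : 0 < l.2 := lt_of_lt_of_le (by linarith) hy1
    have hvfin : volume (Vset α s₀ l.1 l.2 (a n)) ≠ ⊤ :=
      (lt_of_le_of_lt (measure_mono (Vset_sub α s₀ l.1 l.2 (a n))) hΩfin).ne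
    have hvol := Vset_vol α s₀ l.1 l.2 (a n) hα hs₀0 hs₀1 hy0 han.2
      (by rw [← hε1]; exact hsmall l.2 hy1)
    rw [← hε1] at hvol
    have hA : ε1/l.2*(1-s₀) ≤ (volume (Vset α s₀ l.1 l.2 (a n))).toReal :=
      (ENNReal.ofReal_le_iff_le_toReal hvfin).1 hvol
    have hB : ε1/R ≤ ε1/l.2 := by
      apply div_le_div_of_nonneg_left hε1pos.le hy0 (le_of_lt hy2)
    nlinarith [hA, hB]
  have hsum : (J.card : ℝ) * (ε1/R*(1-s₀))
      ≤ ∑ l ∈ J, (volume (Vset α s₀ l.1 l.2 (a n))).toReal := by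
    calc (J.card : ℝ) * (ε1/R*(1-s₀)) = ∑ _l ∈ J, ε1/R*(1-s₀) := by
          rw [Finset.sum_const, nsmul_eq_mul]
      _ ≤ _ := Finset.sum_le_sum hVlb
  have hIlb : (J.card : ℝ) * (ε1/R*(1-s₀)) ≤ ∫ p in Omega0 α s₀, g p := by
    rw [← hIJ] at hsum
    exact le_trans hsum (setIntegral_mono_on hgJint hgint hΩmeas hptle)
  -- final arithmetic
  have hfin1 : cω*R^2/2 * (ε1/R*(1-s₀)) ≤ (J.card:ℝ) * (ε1/R*(1-s₀)) :=
    mul_le_mul_of_nonneg_right hJcard (mul_nonneg (le_of_lt (div_pos hε1pos hRpos)) (by linarith))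
  have hval : cω*R^2/2 * (ε1/R*(1-s₀)) = cω*(R*ε1)*(1-s₀)/2 := by
    field_simp
  rw [hRε1] at hval
  have hLle : cω*(s₀*cω*β)*(1-s₀)/2 ≤ ∫ p in Omega0 α s₀, g p := by
    rw [← hval]
    exact le_trans hfin1 hIlb
  calc s₀ * (1 - s₀) * cω^2 / (2*α) * β
      ≤ 2/α * (cω*(s₀*cω*β)*(1-s₀)/2) := by
        rw [show s₀*(1-s₀)*cω^2/(2*α)*β = (s₀*(1-s₀)*cω^2*β/2)/α from by ring,
          show (2/α) * (cω*(s₀*cω*β)*(1-s₀)/2) = (s₀*(1-s₀)*cω^2*β)/α from by ring]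
        refine (div_le_div_iff_of_pos_right hα).2 ?_
        nlinarith [mul_pos (mul_pos hs₀0 (by linarith : (0:ℝ) < 1 - s₀)) (mul_pos (mul_pos hcω hcω) hβ)]
    _ ≤ 2/α * ∫ p in Omega0 α s₀, g p :=
        mul_le_mul_of_nonneg_left hLle (by positivity)
end

section
/- Let Γ be a subgroup of SL(2,ℝ), α > 0, and suppose: the matrix h_α = [[1, α],[0, 1]] lies in Γ; −Id ∈ Γ; the stabilizer of e₁ = (1,0) in Γ (for the action by matrix–vector multiplication) is exactly {h_α^n : n ∈ ℤ}. Let Λ ⊆ ℝ² be Γ-invariant and locally finite with e₁ ∈ Λ. For j > 0 let P_j = {(u₁, u₂) ∈ Λ × Λ : u₁ ∈ Γ·e₁ and |det(u₁, u₂)| = j}, where det(u₁, u₂) is the determinant of the 2×2 matrix with columns u₁ and u₂, and let Γ act diagonally on P_j by γ·(u₁,u₂) = (γu₁, γu₂). Then the number of Γ-orbits in P_j equals 2·φ(j), where φ(j) = #{x ∈ ℝ : (x,j) ∈ Λ and 0 ≤ x < αj}; in particular the number of orbits is 0 when j is not a height of Λ. -/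
open Matrix

private lemma mv2 (A : Matrix (Fin 2) (Fin 2) ℝ) (v : Fin 2 → ℝ) :
    A.mulVec v = ![A 0 0 * v 0 + A 0 1 * v 1, A 1 0 * v 0 + A 1 1 * v 1] := by
  funext i
  fin_cases i <;> simp [Matrix.mulVec, dotProduct, Fin.sum_univ_two]

private lemma det_pair (γ : Matrix.SpecialLinearGroup (Fin 2) ℝ) (u v : Fin 2 → ℝ) :
    ((γ : Matrix (Fin 2) (Fin 2) ℝ).mulVec u) 0 * ((γ : Matrix (Fin 2) (Fin 2) ℝ).mulVec v) 1
      - ((γ : Matrix (Fin 2) (Fin 2) ℝ).mulVec v) 0 * ((γ : Matrix (Fin 2) (Fin 2) ℝ).mulVec u) 1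
      = u 0 * v 1 - v 0 * u 1 := by
  have h : (γ : Matrix (Fin 2) (Fin 2) ℝ).det = 1 := γ.2
  rw [Matrix.det_fin_two] at h
  simp only [mv2, Matrix.cons_val_zero, Matrix.cons_val_one, Matrix.head_cons]
  linear_combination (u 0 * v 1 - v 0 * u 1) * h

private lemma inv_mv (γ : Matrix.SpecialLinearGroup (Fin 2) ℝ) (v w : Fin 2 → ℝ)
    (h : (γ : Matrix (Fin 2) (Fin 2) ℝ).mulVec v = w) :
    ((γ⁻¹ : Matrix.SpecialLinearGroup (Fin 2) ℝ) : Matrix (Fin 2) (Fin 2) ℝ).mulVec w = v := by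
  rw [← h, Matrix.mulVec_mulVec]
  have h2 : ((γ⁻¹ : Matrix.SpecialLinearGroup (Fin 2) ℝ) : Matrix (Fin 2) (Fin 2) ℝ)
      * (γ : Matrix (Fin 2) (Fin 2) ℝ) = 1 := by
    rw [← Matrix.SpecialLinearGroup.coe_mul, inv_mul_cancel]
    simp
  rw [h2, Matrix.one_mulVec]

private lemma hpow_mv (α : ℝ) (hαel : Matrix.SpecialLinearGroup (Fin 2) ℝ)
    (hαmat : (hαel : Matrix (Fin 2) (Fin 2) ℝ) = !![1, α; 0, 1]) :
    ∀ (n : ℤ) (v : Fin 2 → ℝ),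
      ((hαel ^ n : Matrix.SpecialLinearGroup (Fin 2) ℝ) : Matrix (Fin 2) (Fin 2) ℝ).mulVec v
        = ![v 0 + n * α * v 1, v 1] := by
  have base : ∀ v : Fin 2 → ℝ, (hαel : Matrix (Fin 2) (Fin 2) ℝ).mulVec v
      = ![v 0 + α * v 1, v 1] := by
    intro v
    rw [hαmat, mv2]
    funext i; fin_cases i <;> simp
  intro n
  induction n using Int.induction_on with
  | zero =>
    intro v
    simp only [zpow_zero, Matrix.SpecialLinearGroup.coe_one, Matrix.one_mulVec]
    funext i; fin_cases i <;> simp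
  | succ k ih =>
    intro v
    have h1 : hαel ^ ((k : ℤ) + 1) = hαel ^ (k : ℤ) * hαel := by
      rw [_root_.zpow_add, zpow_one]
    rw [h1, Matrix.SpecialLinearGroup.coe_mul, ← Matrix.mulVec_mulVec, base, ih]
    funext i; fin_cases i <;> simp <;> push_cast <;> ring
  | pred k ih =>
    intro v
    set u : Fin 2 → ℝ := ![v 0 - α * v 1, v 1] with hu
    have hbu : (hαel : Matrix (Fin 2) (Fin 2) ℝ).mulVec u = v := by
      rw [base]
      funext i; fin_cases i <;> simp [hu] <;> ring
    have h1 : hαel ^ (-(k:ℤ) - 1) * hαel = hαel ^ (-(k:ℤ)) := by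
      rw [← _root_.zpow_add_one]; ring_nf
    calc ((hαel ^ (-(k:ℤ) - 1) : Matrix.SpecialLinearGroup (Fin 2) ℝ)
          : Matrix (Fin 2) (Fin 2) ℝ).mulVec v
        = ((hαel ^ (-(k:ℤ) - 1) : Matrix.SpecialLinearGroup (Fin 2) ℝ)
          : Matrix (Fin 2) (Fin 2) ℝ).mulVec ((hαel : Matrix (Fin 2) (Fin 2) ℝ).mulVec u) := by
          rw [hbu]
      _ = ((hαel ^ (-(k:ℤ)) : Matrix.SpecialLinearGroup (Fin 2) ℝ)
          : Matrix (Fin 2) (Fin 2) ℝ).mulVec u := by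
          rw [Matrix.mulVec_mulVec, ← Matrix.SpecialLinearGroup.coe_mul, h1]
      _ = ![v 0 + (-(k:ℤ) - 1) * α * v 1, v 1] := by
          rw [ih]
          funext i; fin_cases i <;> simp [hu] <;> push_cast <;> ring
      _ = ![v 0 + ((-(k:ℤ) - 1 : ℤ) : ℝ) * α * v 1, v 1] := by push_cast; ring_nf

private lemma red_exists (T x : ℝ) (hT : 0 < T) :
    ∃ r : ℝ, ∃ m : ℤ, r = x + m * T ∧ 0 ≤ r ∧ r < T := by
  have hT0 : T ≠ 0 := ne_of_gt hT
  refine ⟨T * Int.fract (x / T), -⌊x / T⌋, ?_,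
    mul_nonneg hT.le (Int.fract_nonneg _), mul_lt_of_lt_one_right hT (Int.fract_lt_one _)⟩
  rw [Int.fract]
  push_cast
  field_simp
  ring

private lemma mod_uniq (T x y : ℝ) (hT : 0 < T) (m : ℤ) (h : y = x + m * T)
    (hx0 : 0 ≤ x) (hx1 : x < T) (hy0 : 0 ≤ y) (hy1 : y < T) : x = y := by
  have h1 : (m : ℝ) * T < 1 * T := by linarith
  have h2 : (-1 : ℝ) * T < (m : ℝ) * T := by linarith
  have hm1 : (m : ℝ) < 1 := lt_of_mul_lt_mul_right h1 hT.le
  have hm2 : (-1 : ℝ) < (m : ℝ) := lt_of_mul_lt_mul_right h2 hT.le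
  have ha : m < 1 := by exact_mod_cast hm1
  have hb : (-1 : ℤ) < m := by exact_mod_cast hm2
  have hm : m = 0 := by omega
  rw [hm] at h
  push_cast at h
  linarith

private abbrev A' (Γ : Subgroup (Matrix.SpecialLinearGroup (Fin 2) ℝ))
    (Λ : Set (Fin 2 → ℝ)) (j : ℝ) : Type :=
  {p : (Fin 2 → ℝ) × (Fin 2 → ℝ) //
      p.1 ∈ Λ ∧ p.2 ∈ Λ ∧
        (∃ γ ∈ Γ, (γ : Matrix (Fin 2) (Fin 2) ℝ).mulVec ![1, 0] = p.1) ∧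
        |p.1 0 * p.2 1 - p.2 0 * p.1 1| = j}

private abbrev Phi (Γ : Subgroup (Matrix.SpecialLinearGroup (Fin 2) ℝ))
    (Λ : Set (Fin 2 → ℝ)) (j : ℝ) (p : A' Γ Λ j) (z : Fin 2 × ℝ) : Prop :=
  ∃ γ ∈ Γ, (γ : Matrix (Fin 2) (Fin 2) ℝ).mulVec p.1.1 = ![1, 0] ∧
    (γ : Matrix (Fin 2) (Fin 2) ℝ).mulVec p.1.2
      = (if z.1 = 0 then ![z.2, j] else ![-z.2, -j])

private lemma card_quot_eq {A : Type*} (R : A → A → Prop) {Z : Type*} (c : A → Z)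
    (hwd : ∀ p q, R p q → c p = c q)
    (hinj : ∀ p q, c p = c q → R p q)
    (hsurj : ∀ z, ∃ p, c p = z) :
    Nat.card (Quot R) = Nat.card Z := by
  apply Nat.card_congr
  refine Equiv.ofBijective (Quot.lift c hwd) ⟨?_, ?_⟩
  · intro x y
    induction x using Quot.ind with | _ p =>
    induction y using Quot.ind with | _ q =>
    intro h
    exact Quot.sound (hinj _ _ h)
  · intro z
    obtain ⟨p, hp⟩ := hsurj z
    exact ⟨Quot.mk R p, hp⟩

private lemma rel_of_phi (Γ : Subgroup (Matrix.SpecialLinearGroup (Fin 2) ℝ))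
    (Λ : Set (Fin 2 → ℝ)) (j : ℝ) (p q : A' Γ Λ j) (z : Fin 2 × ℝ)
    (hp : Phi Γ Λ j p z) (hq : Phi Γ Λ j q z) :
    ∃ γ ∈ Γ, (γ : Matrix (Fin 2) (Fin 2) ℝ).mulVec p.1.1 = q.1.1 ∧
      (γ : Matrix (Fin 2) (Fin 2) ℝ).mulVec p.1.2 = q.1.2 := by
  obtain ⟨γ, hγΓ, hγ1, hγ2⟩ := hp
  obtain ⟨γ', hγ'Γ, hγ'1, hγ'2⟩ := hq
  refine ⟨γ'⁻¹ * γ, mul_mem (inv_mem hγ'Γ) hγΓ, ?_, ?_⟩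
  · rw [Matrix.SpecialLinearGroup.coe_mul, ← Matrix.mulVec_mulVec, hγ1]
    exact inv_mv γ' _ _ hγ'1
  · rw [Matrix.SpecialLinearGroup.coe_mul, ← Matrix.mulVec_mulVec, hγ2]
    exact inv_mv γ' _ _ hγ'2

private lemma ex_phi (α j : ℝ) (hα : 0 < α) (hj : 0 < j)
    (Γ : Subgroup (Matrix.SpecialLinearGroup (Fin 2) ℝ))
    (hαel : Matrix.SpecialLinearGroup (Fin 2) ℝ)
    (hαmat : (hαel : Matrix (Fin 2) (Fin 2) ℝ) = !![1, α; 0, 1])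
    (hαΓ : hαel ∈ Γ)
    (hneg : ∃ γ ∈ Γ, (γ : Matrix (Fin 2) (Fin 2) ℝ) = -1)
    (Λ : Set (Fin 2 → ℝ))
    (hΛinv : ∀ γ ∈ Γ, ∀ v ∈ Λ, (γ : Matrix (Fin 2) (Fin 2) ℝ).mulVec v ∈ Λ)
    (p : A' Γ Λ j) :
    ∃ z : Fin 2 × ℝ, Phi Γ Λ j p z ∧ ![z.2, j] ∈ Λ ∧ 0 ≤ z.2 ∧ z.2 < α * j := by
  have hT : 0 < α * j := mul_pos hα hj
  obtain ⟨h1Λ, h2Λ, ⟨δ, hδΓ, hδ⟩, hdet⟩ := p.2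
  have hγ0 : ((δ⁻¹ : Matrix.SpecialLinearGroup (Fin 2) ℝ)
      : Matrix (Fin 2) (Fin 2) ℝ).mulVec p.1.1 = ![1, 0] := inv_mv δ _ _ hδ
  set w := ((δ⁻¹ : Matrix.SpecialLinearGroup (Fin 2) ℝ)
      : Matrix (Fin 2) (Fin 2) ℝ).mulVec p.1.2 with hw
  have hwΛ : w ∈ Λ := hΛinv _ (inv_mem hδΓ) _ h2Λ
  have hw1 : w 1 = p.1.1 0 * p.1.2 1 - p.1.2 0 * p.1.1 1 := by
    have h := det_pair δ⁻¹ p.1.1 p.1.2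
    rw [hγ0, ← hw] at h
    simpa using h
  have hcases : w 1 = j ∨ w 1 = -j := by
    rw [hw1]
    exact (abs_eq hj.le).mp hdet
  rcases hcases with hpos | hneg2
  · obtain ⟨r, m, hr, hr0, hr1⟩ := red_exists (α * j) (w 0) hT
    have hmem : hαel ^ m * δ⁻¹ ∈ Γ := mul_mem (zpow_mem hαΓ m) (inv_mem hδΓ)
    have hv1 : ((hαel ^ m * δ⁻¹ : Matrix.SpecialLinearGroup (Fin 2) ℝ)
        : Matrix (Fin 2) (Fin 2) ℝ).mulVec p.1.1 = ![1, 0] := by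
      rw [Matrix.SpecialLinearGroup.coe_mul, ← Matrix.mulVec_mulVec, hγ0,
        hpow_mv α hαel hαmat m]
      funext i; fin_cases i <;> simp
    have hv2 : ((hαel ^ m * δ⁻¹ : Matrix.SpecialLinearGroup (Fin 2) ℝ)
        : Matrix (Fin 2) (Fin 2) ℝ).mulVec p.1.2 = ![r, j] := by
      rw [Matrix.SpecialLinearGroup.coe_mul, ← Matrix.mulVec_mulVec, ← hw,
        hpow_mv α hαel hαmat m]
      funext i; fin_cases i
      · simp only [Matrix.cons_val_zero]
        rw [hpos, hr]; ring
      · simpa using hpos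
    refine ⟨((0 : Fin 2), r), ⟨hαel ^ m * δ⁻¹, hmem, hv1, ?_⟩, ?_, hr0, hr1⟩
    · show _ = if (0 : Fin 2) = 0 then ![r, j] else ![-r, -j]
      rw [if_pos rfl]; exact hv2
    · have := hΛinv _ hmem _ h2Λ
      rw [hv2] at this
      exact this
  · obtain ⟨ν, hνΓ, hν⟩ := hneg
    obtain ⟨r, m, hr, hr0, hr1⟩ := red_exists (α * j) (-(w 0)) hT
    have hmem : hαel ^ m * δ⁻¹ ∈ Γ := mul_mem (zpow_mem hαΓ m) (inv_mem hδΓ)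
    have hv1 : ((hαel ^ m * δ⁻¹ : Matrix.SpecialLinearGroup (Fin 2) ℝ)
        : Matrix (Fin 2) (Fin 2) ℝ).mulVec p.1.1 = ![1, 0] := by
      rw [Matrix.SpecialLinearGroup.coe_mul, ← Matrix.mulVec_mulVec, hγ0,
        hpow_mv α hαel hαmat m]
      funext i; fin_cases i <;> simp
    have hv2 : ((hαel ^ m * δ⁻¹ : Matrix.SpecialLinearGroup (Fin 2) ℝ)
        : Matrix (Fin 2) (Fin 2) ℝ).mulVec p.1.2 = ![-r, -j] := by
      rw [Matrix.SpecialLinearGroup.coe_mul, ← Matrix.mulVec_mulVec, ← hw,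
        hpow_mv α hαel hαmat m]
      funext i; fin_cases i
      · simp only [Matrix.cons_val_zero]
        rw [hneg2, hr]; ring
      · simpa using hneg2
    have hνmv : (ν : Matrix (Fin 2) (Fin 2) ℝ).mulVec ![-r, -j] = ![r, j] := by
      rw [hν, Matrix.neg_mulVec, Matrix.one_mulVec]
      funext i; fin_cases i <;> simp
    refine ⟨((1 : Fin 2), r), ⟨hαel ^ m * δ⁻¹, hmem, hv1, ?_⟩, ?_, hr0, hr1⟩
    · show _ = if (1 : Fin 2) = 0 then ![r, j] else ![-r, -j]
      rw [if_neg (by decide)]; exact hv2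
    · have h1 := hΛinv _ hmem _ h2Λ
      rw [hv2] at h1
      have h2 := hΛinv _ hνΓ _ h1
      rw [hνmv] at h2
      exact h2

private lemma uniq_phi (α j : ℝ) (hα : 0 < α) (hj : 0 < j)
    (Γ : Subgroup (Matrix.SpecialLinearGroup (Fin 2) ℝ))
    (hαel : Matrix.SpecialLinearGroup (Fin 2) ℝ)
    (hαmat : (hαel : Matrix (Fin 2) (Fin 2) ℝ) = !![1, α; 0, 1])
    (hstab : ∀ γ : Matrix.SpecialLinearGroup (Fin 2) ℝ,
      (γ ∈ Γ ∧ (γ : Matrix (Fin 2) (Fin 2) ℝ).mulVec ![1, 0] = ![1, 0]) ↔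
        ∃ n : ℤ, γ = hαel ^ n)
    (Λ : Set (Fin 2 → ℝ))
    (p q : A' Γ Λ j) (z z' : Fin 2 × ℝ)
    (hp : Phi Γ Λ j p z) (hq : Phi Γ Λ j q z')
    (hbz : 0 ≤ z.2 ∧ z.2 < α * j) (hbz' : 0 ≤ z'.2 ∧ z'.2 < α * j)
    (hr : ∃ δ ∈ Γ, (δ : Matrix (Fin 2) (Fin 2) ℝ).mulVec p.1.1 = q.1.1 ∧
      (δ : Matrix (Fin 2) (Fin 2) ℝ).mulVec p.1.2 = q.1.2) :
    z = z' := by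
  have hT : 0 < α * j := mul_pos hα hj
  obtain ⟨γ, hγΓ, hγ1, hγ2⟩ := hp
  obtain ⟨γ', hγ'Γ, hγ'1, hγ'2⟩ := hq
  obtain ⟨δ, hδΓ, hδ1, hδ2⟩ := hr
  have hσΓ : γ' * δ * γ⁻¹ ∈ Γ := mul_mem (mul_mem hγ'Γ hδΓ) (inv_mem hγΓ)
  have hσ1 : ((γ' * δ * γ⁻¹ : Matrix.SpecialLinearGroup (Fin 2) ℝ)
      : Matrix (Fin 2) (Fin 2) ℝ).mulVec ![1, 0] = ![1, 0] := by
    rw [Matrix.SpecialLinearGroup.coe_mul, Matrix.SpecialLinearGroup.coe_mul,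
      ← Matrix.mulVec_mulVec, ← Matrix.mulVec_mulVec, inv_mv γ _ _ hγ1, hδ1, hγ'1]
  obtain ⟨n, hn⟩ := (hstab _).mp ⟨hσΓ, hσ1⟩
  have hσ2 : ((γ' * δ * γ⁻¹ : Matrix.SpecialLinearGroup (Fin 2) ℝ)
      : Matrix (Fin 2) (Fin 2) ℝ).mulVec (if z.1 = 0 then ![z.2, j] else ![-z.2, -j])
      = (if z'.1 = 0 then ![z'.2, j] else ![-z'.2, -j]) := by
    rw [Matrix.SpecialLinearGroup.coe_mul, Matrix.SpecialLinearGroup.coe_mul,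
      ← Matrix.mulVec_mulVec, ← Matrix.mulVec_mulVec, inv_mv γ _ _ hγ2, hδ2, hγ'2]
  rw [hn, hpow_mv α hαel hαmat n] at hσ2
  obtain ⟨i, x⟩ := z
  obtain ⟨i', x'⟩ := z'
  dsimp only at hσ2 hbz hbz' ⊢
  have hii : i = 0 ∨ i = 1 := by omega
  have hii' : i' = 0 ∨ i' = 1 := by omega
  rcases hii with rfl | rfl <;> rcases hii' with rfl | rfl
  · rw [if_pos rfl, if_pos rfl] at hσ2
    have h0 := congrFun hσ2 0
    simp only [Matrix.cons_val_zero, Matrix.cons_val_one, Matrix.head_cons] at h0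
    simp only [Prod.mk.injEq]
    refine ⟨trivial, mod_uniq (α * j) x x' hT n (by linear_combination -h0)
      hbz.1 hbz.2 hbz'.1 hbz'.2⟩
  · rw [if_pos rfl, if_neg (by decide)] at hσ2
    have h1 := congrFun hσ2 1
    simp only [Matrix.cons_val_zero, Matrix.cons_val_one, Matrix.head_cons] at h1
    exfalso; linarith
  · rw [if_neg (by decide), if_pos rfl] at hσ2
    have h1 := congrFun hσ2 1
    simp only [Matrix.cons_val_zero, Matrix.cons_val_one, Matrix.head_cons] at h1
    exfalso; linarith
  · rw [if_neg (by decide), if_neg (by decide)] at hσ2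
    have h0 := congrFun hσ2 0
    simp only [Matrix.cons_val_zero, Matrix.cons_val_one, Matrix.head_cons] at h0
    simp only [Prod.mk.injEq]
    refine ⟨trivial, mod_uniq (α * j) x x' hT n (by linear_combination h0)
      hbz.1 hbz.2 hbz'.1 hbz'.2⟩

/-- Counting `Γ`-orbits of pairs `(u₁, u₂) ∈ Λ × Λ` with `u₁ ∈ Γ·e₁` and
`|det(u₁, u₂)| = j`: the number of orbits is `2 φ(j)`, where `φ(j)` is the
number of `x ∈ [0, αj)` with `(x, j) ∈ Λ`. -/
theorem orbit_count_eq_two_phi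
    (α : ℝ) (hα : 0 < α)
    (Γ : Subgroup (Matrix.SpecialLinearGroup (Fin 2) ℝ))
    (hαel : Matrix.SpecialLinearGroup (Fin 2) ℝ)
    (hαmat : (hαel : Matrix (Fin 2) (Fin 2) ℝ) = !![1, α; 0, 1])
    (hαΓ : hαel ∈ Γ)
    (hneg : ∃ γ ∈ Γ, (γ : Matrix (Fin 2) (Fin 2) ℝ) = -1)
    -- the stabilizer of `e₁ = (1,0)` in `Γ` is exactly the powers of `h_α`
    (hstab : ∀ γ : Matrix.SpecialLinearGroup (Fin 2) ℝ,
      (γ ∈ Γ ∧ (γ : Matrix (Fin 2) (Fin 2) ℝ).mulVec ![1, 0] = ![1, 0]) ↔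
        ∃ n : ℤ, γ = hαel ^ n)
    (Λ : Set (Fin 2 → ℝ))
    (hΛinv : ∀ γ ∈ Γ, ∀ v ∈ Λ, (γ : Matrix (Fin 2) (Fin 2) ℝ).mulVec v ∈ Λ)
    (hloc : ∀ K : Set (Fin 2 → ℝ), IsCompact K → (Λ ∩ K).Finite)
    (he₁ : ![1, 0] ∈ Λ)
    (j : ℝ) (hj : 0 < j) :
    Nat.card (Quot (fun p q : {p : (Fin 2 → ℝ) × (Fin 2 → ℝ) //
        p.1 ∈ Λ ∧ p.2 ∈ Λ ∧
          (∃ γ ∈ Γ, (γ : Matrix (Fin 2) (Fin 2) ℝ).mulVec ![1, 0] = p.1) ∧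
          |p.1 0 * p.2 1 - p.2 0 * p.1 1| = j} =>
      ∃ γ ∈ Γ, (γ : Matrix (Fin 2) (Fin 2) ℝ).mulVec (p.1).1 = (q.1).1 ∧
        (γ : Matrix (Fin 2) (Fin 2) ℝ).mulVec (p.1).2 = (q.1).2))
      = 2 * Nat.card {x : ℝ | ![x, j] ∈ Λ ∧ 0 ≤ x ∧ x < α * j} := by
  classical
  have hT : 0 < α * j := mul_pos hα hj
  have E : ∀ p : A' Γ Λ j, ∃ z : Fin 2 × ℝ,
      Phi Γ Λ j p z ∧ ![z.2, j] ∈ Λ ∧ 0 ≤ z.2 ∧ z.2 < α * j :=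
    ex_phi α j hα hj Γ hαel hαmat hαΓ hneg Λ hΛinv
  refine Eq.trans (card_quot_eq _
    (fun p : A' Γ Λ j =>
      (((Classical.choose (E p)).1 : Fin 2),
        (⟨(Classical.choose (E p)).2, (Classical.choose_spec (E p)).2⟩ :
          {x : ℝ | ![x, j] ∈ Λ ∧ 0 ≤ x ∧ x < α * j})))
    ?_ ?_ ?_) ?_
  · -- well-defined on orbits
    intro p q hpq
    have hz := uniq_phi α j hα hj Γ hαel hαmat hstab Λ p q _ _
      (Classical.choose_spec (E p)).1 (Classical.choose_spec (E q)).1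
      (Classical.choose_spec (E p)).2.2 (Classical.choose_spec (E q)).2.2 hpq
    simp only [Prod.mk.injEq]
    exact ⟨congrArg Prod.fst hz, Subtype.ext (congrArg Prod.snd hz)⟩
  · -- injective on orbits
    intro p q hc
    simp only [Prod.mk.injEq] at hc
    obtain ⟨h1, h2⟩ := hc
    have hz : Classical.choose (E p) = Classical.choose (E q) :=
      Prod.ext h1 (congrArg Subtype.val h2)
    have hq' : Phi Γ Λ j q (Classical.choose (E p)) := by
      rw [hz]; exact (Classical.choose_spec (E q)).1
    exact rel_of_phi Γ Λ j p q _ (Classical.choose_spec (E p)).1 hq'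
  · -- surjective
    rintro ⟨i, x, hxS⟩
    fin_cases i
    · refine ⟨⟨(![1, 0], ![x, j]), he₁, hxS.1, ⟨1, one_mem Γ, by simp⟩, ?_⟩, ?_⟩
      · simp [abs_of_pos hj]
      · set p : A' Γ Λ j := ⟨(![1, 0], ![x, j]), he₁, hxS.1, ⟨1, one_mem Γ, by simp⟩,
          by simp [abs_of_pos hj]⟩ with hpdef
        have hφ : Phi Γ Λ j p ((0 : Fin 2), x) :=
          ⟨1, one_mem Γ, by simp [hpdef], by
            show _ = if (0 : Fin 2) = 0 then ![x, j] else ![-x, -j]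
            rw [if_pos rfl]; simp [hpdef]⟩
        have hrefl : ∃ δ ∈ Γ, (δ : Matrix (Fin 2) (Fin 2) ℝ).mulVec p.1.1 = p.1.1 ∧
            (δ : Matrix (Fin 2) (Fin 2) ℝ).mulVec p.1.2 = p.1.2 :=
          ⟨1, one_mem Γ, by simp, by simp⟩
        have hz := uniq_phi α j hα hj Γ hαel hαmat hstab Λ p p _ ((0 : Fin 2), x)
          (Classical.choose_spec (E p)).1 hφ
          (Classical.choose_spec (E p)).2.2 ⟨hxS.2.1, hxS.2.2⟩ hrefl
        simp only [Prod.mk.injEq]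
        exact ⟨congrArg Prod.fst hz, Subtype.ext (congrArg Prod.snd hz)⟩
    · obtain ⟨ν, hνΓ, hν⟩ := hneg
      have hνmv : (ν : Matrix (Fin 2) (Fin 2) ℝ).mulVec ![x, j] = ![-x, -j] := by
        rw [hν, Matrix.neg_mulVec, Matrix.one_mulVec]
        funext k; fin_cases k <;> simp
      have hmem2 : ![-x, -j] ∈ Λ := by
        have := hΛinv _ hνΓ _ hxS.1
        rw [hνmv] at this
        exact this
      refine ⟨⟨(![1, 0], ![-x, -j]), he₁, hmem2, ⟨1, one_mem Γ, by simp⟩, ?_⟩, ?_⟩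
      · simp [abs_of_pos hj]
      · set p : A' Γ Λ j := ⟨(![1, 0], ![-x, -j]), he₁, hmem2, ⟨1, one_mem Γ, by simp⟩,
          by simp [abs_of_pos hj]⟩ with hpdef
        have hφ : Phi Γ Λ j p ((1 : Fin 2), x) :=
          ⟨1, one_mem Γ, by simp [hpdef], by
            show _ = if (1 : Fin 2) = 0 then ![x, j] else ![-x, -j]
            rw [if_neg (by decide)]; simp [hpdef]⟩
        have hrefl : ∃ δ ∈ Γ, (δ : Matrix (Fin 2) (Fin 2) ℝ).mulVec p.1.1 = p.1.1 ∧
            (δ : Matrix (Fin 2) (Fin 2) ℝ).mulVec p.1.2 = p.1.2 :=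
          ⟨1, one_mem Γ, by simp, by simp⟩
        have hz := uniq_phi α j hα hj Γ hαel hαmat hstab Λ p p _ ((1 : Fin 2), x)
          (Classical.choose_spec (E p)).1 hφ
          (Classical.choose_spec (E p)).2.2 ⟨hxS.2.1, hxS.2.2⟩ hrefl
        simp only [Prod.mk.injEq]
        exact ⟨congrArg Prod.fst hz, Subtype.ext (congrArg Prod.snd hz)⟩
  · rw [Nat.card_prod, Nat.card_eq_fintype_card, Fintype.card_fin]
end
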